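/- arXiv:1410.1693 — 8 statements merged into one kernel-verified Lean document; each statement's English description precedes it below -/
import Mathlib

section
/- The real number 1/64 − (1/8)·Σ_{k=1}^∞ 2^{−(k²+4k+6)} is irrational. -/
/-!
Multiplying `x = ∑ b^(-f k)` by `b^(f n)` leaves an integer plus a positive tail of size
at most `b^(-(f (n+1) - f n)) / (1 - b⁻¹)`. When the gaps `f (n+1) - f n` are unbounded
(here they are `2n + 7`), `x` has integer multiples arbitrarily close to, but different from,
integers, which no rational number has.
-/

theorem irrational_of_forall_exists_abs_intCast_mul_sub_lt {x : ℝ}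
    (h : ∀ ε > 0, ∃ m a : ℤ, 0 < |m * x - a| ∧ |m * x - a| < ε) : Irrational x := by
  rintro ⟨q, rfl⟩
  obtain ⟨m, a, hpos, hlt⟩ := h (1 / q.den) (by positivity)
  have hden : (0 : ℝ) < q.den := by positivity
  have hz : (m : ℝ) * q - a = ((m * q.num - a * q.den : ℤ) : ℝ) / q.den := by
    rw [Rat.cast_def]; push_cast; field_simp
  rw [hz, abs_div, abs_of_pos hden] at hpos hlt
  have hz0 : m * q.num - a * q.den ≠ 0 := by
    rintro h0; simp [h0] at hpos
  have hone : (1 : ℝ) ≤ |((m * q.num - a * q.den : ℤ) : ℝ)| := by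
    exact_mod_cast Int.one_le_abs hz0
  exact absurd hlt (not_lt.2 (div_le_div_of_nonneg_right hone hden.le))

section GeometricComp

variable {r : ℝ} {f : ℕ → ℕ}

theorem summable_pow_comp_of_strictMono (hr₀ : 0 ≤ r) (hr₁ : r < 1) (hf : StrictMono f) :
    Summable fun k ↦ r ^ f k :=
  (summable_geometric_of_lt_one hr₀ hr₁).comp_injective hf.injective

theorem tsum_pow_comp_le_of_strictMono (hr₀ : 0 ≤ r) (hr₁ : r < 1) (hf : StrictMono f) :
    ∑' k, r ^ f k ≤ r ^ f 0 / (1 - r) := by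
  have hle : ∀ k, r ^ f k ≤ r ^ f 0 * r ^ k := fun k ↦ by
    rw [← pow_add]
    exact pow_le_pow_of_le_one hr₀ hr₁.le (by simpa [add_comm] using hf.add_le_nat k 0)
  calc ∑' k, r ^ f k ≤ ∑' k, r ^ f 0 * r ^ k :=
        (summable_pow_comp_of_strictMono hr₀ hr₁ hf).tsum_le_tsum hle
          ((summable_geometric_of_lt_one hr₀ hr₁).mul_left _)
    _ = r ^ f 0 / (1 - r) := by
        rw [tsum_mul_left, tsum_geometric_of_lt_one hr₀ hr₁, div_eq_mul_inv]

theorem tsum_pow_comp_pos_of_strictMono (hr₀ : 0 < r) (hr₁ : r < 1) (hf : StrictMono f) :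
    0 < ∑' k, r ^ f k :=
  (summable_pow_comp_of_strictMono hr₀.le hr₁ hf).tsum_pos (fun _ ↦ by positivity) 0
    (by positivity)

end GeometricComp

section LacunaryBase

variable {b : ℕ} {f : ℕ → ℕ}

theorem natCast_pow_mul_tsum_inv_pow_comp_eq (hb : 1 < b) (hf : StrictMono f) (n : ℕ) :
    (b : ℝ) ^ f n * ∑' k, (b : ℝ)⁻¹ ^ f k =
      ((∑ i ∈ Finset.range (n + 1), b ^ (f n - f i) : ℕ) : ℝ) +
        ∑' k, (b : ℝ)⁻¹ ^ (f (k + (n + 1)) - f n) := by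
  have hb₀ : (b : ℝ) ≠ 0 := by positivity
  have hr₁ : (b : ℝ)⁻¹ < 1 := inv_lt_one_of_one_lt₀ (by exact_mod_cast hb)
  rw [← (summable_pow_comp_of_strictMono (by positivity) hr₁ hf).sum_add_tsum_nat_add (n + 1),
    mul_add, Finset.mul_sum, ← tsum_mul_left]
  push_cast
  congr 1
  · refine Finset.sum_congr rfl fun i hi ↦ ?_
    have hi : f i ≤ f n := hf.monotone (Nat.lt_succ_iff.1 (Finset.mem_range.1 hi))
    rw [pow_sub₀ _ hb₀ hi, inv_pow]
  · refine tsum_congr fun k ↦ ?_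
    rw [inv_pow_sub₀ hb₀ (hf.monotone (by omega)), inv_pow, mul_comm]

theorem irrational_tsum_inv_pow_comp_of_forall_exists_le (hb : 1 < b) (hf : StrictMono f)
    (hgap : ∀ N, ∃ n, f n + N ≤ f (n + 1)) : Irrational (∑' k, (b : ℝ)⁻¹ ^ f k) := by
  set r : ℝ := (b : ℝ)⁻¹
  have hr₀ : 0 < r := by positivity
  have hr₁ : r < 1 := inv_lt_one_of_one_lt₀ (by exact_mod_cast hb)
  refine irrational_of_forall_exists_abs_intCast_mul_sub_lt fun ε hε ↦ ?_
  obtain ⟨N, hN⟩ := exists_pow_lt_of_lt_one (mul_pos hε (sub_pos.2 hr₁)) hr₁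
  obtain ⟨n, hn⟩ := hgap N
  set g : ℕ → ℕ := fun k ↦ f (k + (n + 1)) - f n
  have hg : StrictMono g := fun i j hij ↦
    Nat.sub_lt_sub_right (hf.monotone (by omega)) (hf (by omega))
  refine ⟨b ^ f n, ((∑ i ∈ Finset.range (n + 1), b ^ (f n - f i) : ℕ) : ℤ), ?_⟩
  have hsub : ((b ^ f n : ℤ) : ℝ) * ∑' k, r ^ f k
      - ((∑ i ∈ Finset.range (n + 1), b ^ (f n - f i) : ℕ) : ℤ) = ∑' k, r ^ g k := by
    push_cast
    rw [natCast_pow_mul_tsum_inv_pow_comp_eq hb hf n]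
    push_cast
    ring
  rw [hsub, abs_of_pos (tsum_pow_comp_pos_of_strictMono hr₀ hr₁ hg)]
  refine ⟨tsum_pow_comp_pos_of_strictMono hr₀ hr₁ hg, ?_⟩
  calc ∑' k, r ^ g k ≤ r ^ g 0 / (1 - r) := tsum_pow_comp_le_of_strictMono hr₀.le hr₁ hg
    _ ≤ r ^ N / (1 - r) := by
        have hN' : N ≤ g 0 := by simp only [g, zero_add]; omega
        gcongr ?_ / _
        exact pow_le_pow_of_le_one hr₀.le hr₁.le hN'
    _ < ε := (div_lt_iff₀ (sub_pos.2 hr₁)).2 hN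

end LacunaryBase

/-- The real number `1/64 − (1/8)·Σ_{k=1}^∞ 2^{−(k²+4k+6)}` is irrational.
(The sum over `k ≥ 1` is written as a `tsum` over `ℕ` via the shift `k ↦ k+1`.) -/
theorem statement3 :
    Irrational (1 / 64 - (1 / 8) * ∑' k : ℕ, (1 : ℝ) / 2 ^ ((k + 1) ^ 2 + 4 * (k + 1) + 6)) := by
  set f : ℕ → ℕ := fun k ↦ (k + 1) ^ 2 + 4 * (k + 1) + 6
  have hf : StrictMono f := strictMono_nat_of_lt_succ fun n ↦ by simp only [f]; nlinarith
  have hgap : ∀ N, ∃ n, f n + N ≤ f (n + 1) := fun N ↦ ⟨N, by simp only [f]; nlinarith⟩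
  have h := irrational_tsum_inv_pow_comp_of_forall_exists_le (b := 2) one_lt_two hf hgap
  simpa [f] using (h.ratCast_mul (q := 1 / 8) (by norm_num)).ratCast_sub (q := 1 / 64)
end

section
/- As p tends to infinity over odd primes, F(p) converges to 47/64 + (1/64)·Σ_{k=1}^∞ 2^{−(k+2^k)}, where F(p) := 47/64 + (1/128)·1/(2^{o(p)}−1) + (1/64)·(2^p/(2^p−1))·(2^{o(p)}/(2^{o(p)}−1))·Σ_{x∈L(p)} 2^{−(x+r(p,x))}. -/
/-!
Since `2^{o(p)} ≡ 1 (mod p)`, we have `p < 2^{o(p)}`; hence `o(p) → ∞`, both prefactors of the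
sum tend to `1` and the term `1/(2^{o(p)} - 1)` vanishes. The sum over `L(p)` is a series in `x`
whose terms are bounded by `2^{-x}`. For fixed `x = 2^k` with `k ≥ 1` the term is eventually
`2^{-(2^k + k)}`, because `r(p, 2^k) = k` as soon as `2^k ≤ p < 2^{o(p)}`. For any other `x` the
term is at most `1/p`: then `2^{r(p,x)} ≠ x`, so `p` divides the nonzero `2^{r(p,x)} - x` and
`p ≤ 2^{x + r(p,x)}`. Dominated convergence (Tannery's theorem) finishes the proof.
-/

/-- `ℤ[1/2]`: the subring of `ℚ` of rationals whose denominator is a power of `2`. -/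
def Zhalf : Subring ℚ where
  carrier := {q : ℚ | ∃ (m : ℤ) (n : ℕ), q = (m : ℚ) / 2 ^ n}
  zero_mem' := ⟨0, 0, by norm_num⟩
  one_mem' := ⟨1, 0, by norm_num⟩
  add_mem' := by
    rintro a b ⟨m, n, rfl⟩ ⟨m', n', rfl⟩
    exact ⟨m * 2 ^ n' + m' * 2 ^ n, n + n', by push_cast [pow_add]; field_simp⟩
  mul_mem' := by
    rintro a b ⟨m, n, rfl⟩ ⟨m', n', rfl⟩
    exact ⟨m * m', n + n', by push_cast [pow_add]; field_simp⟩
  neg_mem' := by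
    rintro a ⟨m, n, rfl⟩
    exact ⟨-m, n, by push_cast; ring⟩

/-- `o(p)`: the multiplicative order of `2` modulo `p`. -/
noncomputable def oOrd (p : ℕ) : ℕ := orderOf (2 : ZMod p)

/-- `L(p)`: the set of `x` with `2 ≤ x ≤ p+1` congruent mod `p` to a power of `2`. -/
noncomputable def Lset (p : ℕ) : Finset ℕ :=
  letI : DecidablePred fun x : ℕ => ∃ i : ℕ, (2 : ZMod p) ^ i = (x : ZMod p) :=
    fun _ => Classical.propDecidable _
  (Finset.Icc 2 (p + 1)).filter fun x => ∃ i : ℕ, (2 : ZMod p) ^ i = (x : ZMod p)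

/-- `r(p,x)`: the least natural number `r` with `2^r ≡ x (mod p)`. -/
noncomputable def rpx (p x : ℕ) : ℕ := sInf {r : ℕ | (2 : ZMod p) ^ r = (x : ZMod p)}

/-- The value `F(p)` from the paper. -/
noncomputable def Fval (p : ℕ) : ℝ :=
  47 / 64 + (1 / 128) * (1 / (2 ^ oOrd p - 1)) +
    (1 / 64) * (2 ^ p / (2 ^ p - 1)) * ((2 : ℝ) ^ oOrd p / (2 ^ oOrd p - 1)) *
      ∑ x ∈ Lset p, (1 : ℝ) / 2 ^ (x + rpx p x)

open Filter Topology

lemma tendsto_one_div_two_pow_sub_one :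
    Tendsto (fun n : ℕ => 1 / ((2 : ℝ) ^ n - 1)) atTop (𝓝 0) := by
  simp_rw [one_div]
  exact (tendsto_atTop_add_const_right _ (-1)
    (tendsto_pow_atTop_atTop_of_one_lt one_lt_two)).inv_tendsto_atTop

lemma tendsto_two_pow_div_two_pow_sub_one :
    Tendsto (fun n : ℕ => (2 : ℝ) ^ n / (2 ^ n - 1)) atTop (𝓝 1) := by
  have h := tendsto_one_div_two_pow_sub_one.const_add 1
  rw [add_zero] at h
  refine h.congr' ?_
  filter_upwards [eventually_ge_atTop 1] with n hn
  have hne : (2 : ℝ) ^ n - 1 ≠ 0 := sub_ne_zero.2 (one_lt_pow₀ one_lt_two (by omega)).ne'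
  rw [eq_div_iff hne, add_mul, one_div_mul_cancel hne]
  ring

lemma oOrd_pos {p : ℕ} (hp : p.Prime) (hp2 : p ≠ 2) : 0 < oOrd p := by
  have := Fact.mk hp
  have h2 : (2 : ZMod p) ≠ 0 := by
    intro h
    rw [show (2 : ZMod p) = ((2 : ℕ) : ZMod p) by norm_cast, ZMod.natCast_eq_zero_iff] at h
    exact hp2 ((Nat.prime_dvd_prime_iff_eq hp Nat.prime_two).1 h)
  exact Nat.pos_of_dvd_of_pos (ZMod.orderOf_dvd_card_sub_one h2) (by have := hp.two_le; omega)

lemma lt_two_pow_oOrd {p : ℕ} (hp : p.Prime) (hp2 : p ≠ 2) : p < 2 ^ oOrd p := by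
  have hmod : 2 ^ oOrd p ≡ 1 [MOD p] := by
    rw [← ZMod.natCast_eq_natCast_iff]
    push_cast
    exact pow_orderOf_eq_one _
  have hpow : 1 < 2 ^ oOrd p := Nat.one_lt_two_pow (oOrd_pos hp hp2).ne'
  have := Nat.le_of_dvd (by omega) ((Nat.modEq_iff_dvd' hpow.le).1 hmod.symm)
  omega

lemma tendsto_oOrd : Tendsto oOrd (atTop ⊓ 𝓟 {p : ℕ | p.Prime ∧ p ≠ 2}) atTop := by
  refine tendsto_atTop.2 fun n => ?_
  filter_upwards [mem_inf_of_right (mem_principal_self _),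
    mem_inf_of_left (eventually_ge_atTop (2 ^ n))] with p hp hnp
  exact (Nat.pow_lt_pow_iff_right (by norm_num)).1 (hnp.trans_lt (lt_two_pow_oOrd hp.1 hp.2)) |>.le

lemma two_pow_rpx {p x : ℕ} (hx : x ∈ Lset p) : (2 : ZMod p) ^ rpx p x = x := by
  simp only [Lset, Finset.mem_filter] at hx
  exact Nat.sInf_mem hx.2

lemma rpx_two_pow {p k : ℕ} (hk : k < oOrd p) : rpx p (2 ^ k) = k := by
  have hr : (2 : ZMod p) ^ rpx p (2 ^ k) = 2 ^ k := by
    have : rpx p (2 ^ k) ∈ {r : ℕ | (2 : ZMod p) ^ r = ((2 ^ k : ℕ) : ZMod p)} :=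
      Nat.sInf_mem ⟨k, by simp⟩
    simpa using this
  have hle : rpx p (2 ^ k) ≤ k := Nat.sInf_le (by simp)
  unfold oOrd at hk
  have hfin : IsOfFinOrder (2 : ZMod p) := orderOf_pos_iff.1 (by omega)
  rw [hfin.pow_inj_mod] at hr
  rwa [Nat.mod_eq_of_lt (hle.trans_lt hk), Nat.mod_eq_of_lt hk] at hr

lemma two_pow_mem_Lset {p k : ℕ} (hk : 0 < k) (hkp : 2 ^ k ≤ p + 1) : 2 ^ k ∈ Lset p := by
  simp only [Lset, Finset.mem_filter, Finset.mem_Icc]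
  exact ⟨⟨Nat.le_self_pow hk.ne' 2, hkp⟩, k, by push_cast; rfl⟩

lemma le_two_pow_add_rpx {p x : ℕ} (hx : x ∈ Lset p) (hne : x ≠ 2 ^ rpx p x) :
    p ≤ 2 ^ (x + rpx p x) := by
  set r := rpx p x
  have hmod : 2 ^ r ≡ x [MOD p] := by
    rw [← ZMod.natCast_eq_natCast_iff]
    push_cast
    exact two_pow_rpx hx
  rw [pow_add]
  rcases Ne.lt_or_gt hne with h | h
  · calc p ≤ 2 ^ r - x := Nat.le_of_dvd (by omega) ((Nat.modEq_iff_dvd' h.le).1 hmod.symm)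
      _ ≤ 2 ^ x * 2 ^ r := (Nat.sub_le _ _).trans (Nat.le_mul_of_pos_left _ (by positivity))
  · calc p ≤ x - 2 ^ r := Nat.le_of_dvd (by omega) ((Nat.modEq_iff_dvd' h.le).1 hmod)
      _ ≤ 2 ^ x * 2 ^ r := by
        have := Nat.lt_two_pow_self (n := x)
        exact (Nat.sub_le _ _).trans (this.le.trans (Nat.le_mul_of_pos_right _ (by positivity)))

noncomputable def lsetTerm (p : ℕ) : ℕ → ℝ :=
  (Lset p : Set ℕ).indicator fun x => 1 / 2 ^ (x + rpx p x)

noncomputable def limitTerm : ℕ → ℝ :=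
  (Set.range fun k : ℕ => 2 ^ (k + 1)).indicator fun x => 1 / 2 ^ (x + Nat.log 2 x)

lemma norm_lsetTerm_le (p x : ℕ) : ‖lsetTerm p x‖ ≤ (1 / 2) ^ x := by
  rw [lsetTerm, Real.norm_of_nonneg (Set.indicator_nonneg (fun _ _ => by positivity) _)]
  refine (Set.indicator_le_self' fun _ _ => by positivity) x |>.trans ?_
  rw [one_div_pow]
  exact one_div_le_one_div_of_le (by positivity) (pow_le_pow_right₀ (by norm_num) (by omega))

lemma lsetTerm_two_pow {p k : ℕ} (hp : p.Prime) (hp2 : p ≠ 2) (hk : 2 ^ (k + 1) ≤ p) :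
    lsetTerm p (2 ^ (k + 1)) = limitTerm (2 ^ (k + 1)) := by
  have hko : k + 1 < oOrd p :=
    (Nat.pow_lt_pow_iff_right (by norm_num)).1 (hk.trans_lt (lt_two_pow_oOrd hp hp2))
  rw [lsetTerm, limitTerm, Set.indicator_of_mem (two_pow_mem_Lset (by omega) (by omega)),
    Set.indicator_of_mem (Set.mem_range_self k), rpx_two_pow hko, Nat.log_pow (by norm_num)]

lemma lsetTerm_le_of_notMem_range {p x : ℕ} (hp : 0 < p)
    (hx : x ∉ Set.range fun k : ℕ => 2 ^ (k + 1)) : lsetTerm p x ≤ 1 / p := by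
  by_cases hxL : x ∈ Lset p
  · have hne : x ≠ 2 ^ rpx p x := by
      rintro hxr
      have h2x : 2 ≤ x := by simp only [Lset, Finset.mem_filter, Finset.mem_Icc] at hxL; omega
      have hr : rpx p x ≠ 0 := by rintro h; rw [h] at hxr; omega
      exact hx ⟨rpx p x - 1, by simp only [Nat.sub_add_cancel (Nat.pos_of_ne_zero hr), ← hxr]⟩
    rw [lsetTerm, Set.indicator_of_mem (Finset.mem_coe.2 hxL)]
    exact one_div_le_one_div_of_le (by exact_mod_cast hp)
      (by exact_mod_cast le_two_pow_add_rpx hxL hne)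
  · rw [lsetTerm, Set.indicator_of_notMem (by simpa using hxL)]
    positivity

lemma tendsto_lsetTerm (x : ℕ) :
    Tendsto (lsetTerm · x) (atTop ⊓ 𝓟 {p : ℕ | p.Prime ∧ p ≠ 2}) (𝓝 (limitTerm x)) := by
  have hprime : ∀ᶠ p in atTop ⊓ 𝓟 {p : ℕ | p.Prime ∧ p ≠ 2}, p.Prime ∧ p ≠ 2 :=
    mem_inf_of_right (mem_principal_self _)
  by_cases hx : x ∈ Set.range fun k : ℕ => 2 ^ (k + 1)
  · obtain ⟨k, rfl⟩ := hx
    refine tendsto_const_nhds.congr' ?_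
    filter_upwards [hprime, mem_inf_of_left (eventually_ge_atTop (2 ^ (k + 1)))] with p hp hkp
    exact (lsetTerm_two_pow hp.1 hp.2 hkp).symm
  · rw [limitTerm, Set.indicator_of_notMem hx]
    refine squeeze_zero' (Eventually.of_forall fun p => ?_) ?_
      (tendsto_one_div_atTop_nhds_zero_nat.mono_left inf_le_left)
    · exact Set.indicator_nonneg (fun _ _ => by positivity) _
    · filter_upwards [hprime] with p hp
      exact lsetTerm_le_of_notMem_range hp.1.pos hx

lemma tsum_limitTerm : ∑' x, limitTerm x = ∑' k : ℕ, (1 : ℝ) / 2 ^ ((k + 1) + 2 ^ (k + 1)) := by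
  have hinj : Function.Injective fun k : ℕ => 2 ^ (k + 1) := fun a b h => by
    simpa using Nat.pow_right_injective le_rfl h
  rw [← hinj.tsum_eq (f := limitTerm) Set.support_indicator_subset]
  refine tsum_congr fun k => ?_
  rw [limitTerm, Set.indicator_of_mem (Set.mem_range_self k), Nat.log_pow (by norm_num),
    add_comm]

lemma tendsto_sum_Lset :
    Tendsto (fun p => ∑ x ∈ Lset p, (1 : ℝ) / 2 ^ (x + rpx p x))
      (atTop ⊓ 𝓟 {p : ℕ | p.Prime ∧ p ≠ 2})
      (𝓝 (∑' k : ℕ, (1 : ℝ) / 2 ^ ((k + 1) + 2 ^ (k + 1)))) := by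
  rw [← tsum_limitTerm]
  exact (tendsto_tsum_of_dominated_convergence summable_geometric_two tendsto_lsetTerm
    (Eventually.of_forall norm_lsetTerm_le)).congr fun p => (sum_eq_tsum_indicator _ _).symm

/-- As `p` tends to infinity over odd primes, `F(p)` converges to
`47/64 + (1/64)·Σ_{k=1}^∞ 2^{−(k+2^k)}`. -/
theorem statement5 :
    Filter.Tendsto Fval (Filter.atTop ⊓ Filter.principal {p : ℕ | p.Prime ∧ p ≠ 2})
      (nhds (47 / 64 + (1 / 64) * ∑' k : ℕ, (1 : ℝ) / 2 ^ ((k + 1) + 2 ^ (k + 1)))) := by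
  have hid : Tendsto id (atTop ⊓ 𝓟 {p : ℕ | p.Prime ∧ p ≠ 2}) atTop :=
    tendsto_id.mono_left inf_le_left
  have h := (tendsto_const_nhds (x := (47 / 64 : ℝ))).add
    ((tendsto_one_div_two_pow_sub_one.comp tendsto_oOrd).const_mul (1 / 128)) |>.add
    ((((tendsto_two_pow_div_two_pow_sub_one.comp hid).const_mul (1 / 64)).mul
      (tendsto_two_pow_div_two_pow_sub_one.comp tendsto_oOrd)).mul tendsto_sum_Lset)
  rwa [mul_zero, add_zero, mul_one, mul_one] at h
end

section
/- Let p be an odd prime and let r be the multiplicative order of 2 modulo p. Then Σ_{k≥1} Σ_{l≥1, l ≡ 2^{k−1}−1 (mod p)} 2^{−(k+l)} = (2^p/(2^p−1))·(2^r/(2^r−1))·Σ_{x∈L(p)} 2^{−(x+r(p,x))}. -/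
/-- Smallest positive representative of `2^j - 1` mod `p`. -/
noncomputable def aFun (p j : ℕ) : ℕ := ((2 : ZMod p) ^ j - 2).val + 1

lemma aux_geom (n : ℕ) (hn : 0 < n) :
    ∑' m : ℕ, ((2 : ℝ)⁻¹) ^ (n * m) = 2 ^ n / (2 ^ n - 1) := by
  have h0 : (0:ℝ) ≤ (2:ℝ)⁻¹ ^ n := by positivity
  have h1 : ((2:ℝ)⁻¹) ^ n < 1 := pow_lt_one₀ (by norm_num) (by norm_num) hn.ne'
  have h2 : (1:ℝ) < 2 ^ n := by
    exact_mod_cast Nat.one_lt_two_pow_iff.mpr hn.ne'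
  have h3 : (2:ℝ) ^ n - 1 ≠ 0 := by linarith
  have h4 : (2:ℝ) ^ n ≠ 0 := by positivity
  have key : ∑' m : ℕ, ((2 : ℝ)⁻¹) ^ (n * m) = ∑' m : ℕ, (((2:ℝ)⁻¹) ^ n) ^ m := by
    apply tsum_congr; intro m; rw [← pow_mul]
  rw [key, tsum_geometric_of_lt_one h0 h1, inv_pow, eq_div_iff h3]
  field_simp

lemma aux_geom_summable (n : ℕ) (hn : 0 < n) :
    Summable fun m : ℕ => ((2 : ℝ)⁻¹) ^ (n * m) := by
  have h0 : (0:ℝ) ≤ (2:ℝ)⁻¹ ^ n := by positivity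
  have h1 : ((2:ℝ)⁻¹) ^ n < 1 := pow_lt_one₀ (by norm_num) (by norm_num) hn.ne'
  have := summable_geometric_of_lt_one h0 h1
  simpa [pow_mul] using this

set_option maxHeartbeats 1000000 in
/-- For an odd prime `p` with `r` the multiplicative order of `2` mod `p`,
`Σ_{k≥1} Σ_{l≥1, l ≡ 2^{k−1}−1 (p)} 2^{−(k+l)}
  = (2^p/(2^p−1))·(2^r/(2^r−1))·Σ_{x∈L(p)} 2^{−(x+r(p,x))}`. -/
theorem statement7 (p : ℕ) (hp : p.Prime) (hp2 : p ≠ 2) :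
    ∑' q : {kl : ℕ × ℕ // 1 ≤ kl.1 ∧ 1 ≤ kl.2 ∧
        ((kl.2 : ZMod p) = 2 ^ (kl.1 - 1) - 1)},
      (1 : ℝ) / 2 ^ ((q : ℕ × ℕ).1 + (q : ℕ × ℕ).2) =
    ((2 : ℝ) ^ p / (2 ^ p - 1)) * ((2 : ℝ) ^ oOrd p / (2 ^ oOrd p - 1)) *
      ∑ x ∈ Lset p, (1 : ℝ) / 2 ^ (x + rpx p x) := by
  haveI : Fact p.Prime := ⟨hp⟩
  haveI : NeZero p := ⟨hp.pos.ne'⟩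
  have hppos : 0 < p := hp.pos
  have hp1 : 1 < p := hp.one_lt
  set r := oOrd p with hrdef
  have hrord : r = orderOf (2 : ZMod p) := hrdef
  have h2ne : (2 : ZMod p) ≠ 0 := by
    intro h
    have h' : ((2 : ℕ) : ZMod p) = 0 := by exact_mod_cast h
    have hdvd : p ∣ 2 := (ZMod.natCast_eq_zero_iff 2 p).mp h'
    exact hp2 ((Nat.prime_dvd_prime_iff_eq hp Nat.prime_two).mp hdvd)
  have hfin : (2 : ZMod p) ^ (p - 1) = 1 := ZMod.pow_card_sub_one_eq_one h2ne
  have hrpos : 0 < r := by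
    rw [hrord]
    exact orderOf_pos_iff.mpr (isOfFinOrder_iff_pow_eq_one.mpr ⟨p - 1, by omega, hfin⟩)
  have hr1 : (2 : ZMod p) ^ r = 1 := by rw [hrord]; exact pow_orderOf_eq_one _
  -- facts about aFun
  have castx : ∀ j : ℕ, ((aFun p j : ℕ) : ZMod p) = 2 ^ j - 1 := by
    intro j
    unfold aFun
    push_cast
    rw [ZMod.natCast_val, ZMod.cast_id]
    ring
  have ha1 : ∀ j, 1 ≤ aFun p j := fun j => Nat.le_add_left 1 _
  have hap : ∀ j, aFun p j ≤ p := by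
    intro j
    have := ZMod.val_lt ((2 : ZMod p) ^ j - 2)
    unfold aFun; omega
  have hper : ∀ q i : ℕ, aFun p (q * r + i) = aFun p i := by
    intro q i
    unfold aFun
    rw [pow_add, pow_mul', hr1, one_pow, one_mul]
  have hpow : ∀ i : ℕ, ((aFun p i + 1 : ℕ) : ZMod p) = 2 ^ i := by
    intro i
    push_cast
    rw [castx i]
    ring
  -- the bijection onto the index set
  have memS : ∀ jm : ℕ × ℕ, 1 ≤ jm.1 + 1 ∧ 1 ≤ aFun p jm.1 + p * jm.2 ∧
      (((aFun p jm.1 + p * jm.2 : ℕ) : ZMod p) = 2 ^ ((jm.1 + 1) - 1) - 1) := by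
    intro jm
    refine ⟨by omega, le_trans (ha1 jm.1) (Nat.le_add_right _ _), ?_⟩
    simp only [Nat.add_sub_cancel]
    push_cast
    rw [ZMod.natCast_self, castx jm.1]
    ring
  let e : ℕ × ℕ → {kl : ℕ × ℕ // 1 ≤ kl.1 ∧ 1 ≤ kl.2 ∧
      ((kl.2 : ZMod p) = 2 ^ (kl.1 - 1) - 1)} :=
    fun jm => ⟨(jm.1 + 1, aFun p jm.1 + p * jm.2), memS jm⟩
  have hbij : Function.Bijective e := by
    constructor
    · rintro ⟨j, m⟩ ⟨j', m'⟩ h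
      have hv : ((j + 1 : ℕ), aFun p j + p * m) = ((j' + 1 : ℕ), aFun p j' + p * m') :=
        congrArg Subtype.val h
      rw [Prod.mk.injEq] at hv
      obtain ⟨h1, h2⟩ := hv
      have h1' : j = j' := by omega
      subst h1'
      have h3 : m = m' := Nat.eq_of_mul_eq_mul_left hppos (by omega)
      rw [h3]
    · rintro ⟨⟨k, l⟩, hk, hl, hmod⟩
      obtain ⟨j, rfl⟩ : ∃ j, k = j + 1 := ⟨k - 1, by omega⟩
      have hcast : (l : ZMod p) = ((aFun p j : ℕ) : ZMod p) := by
        rw [castx j]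
        simpa using hmod
      have hmodeq : l ≡ aFun p j [MOD p] := (ZMod.natCast_eq_natCast_iff _ _ _).mp hcast
      have hle : aFun p j ≤ l := by
        by_contra hlt
        push_neg at hlt
        have hdvd : p ∣ aFun p j - l := (Nat.modEq_iff_dvd' hlt.le).mp hmodeq
        have h0 : 0 < aFun p j - l := by omega
        have hge := Nat.le_of_dvd h0 hdvd
        have := hap j
        omega
      obtain ⟨m, hm⟩ := (Nat.modEq_iff_dvd' hle).mp hmodeq.symm
      refine ⟨(j, m), ?_⟩
      apply Subtype.ext
      have hl2 : aFun p j + p * m = l := by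
        have h5 := Nat.sub_add_cancel hle
        calc aFun p j + p * m = aFun p j + (l - aFun p j) := by rw [← hm]
          _ = l := by omega
      show (j + 1, aFun p j + p * m) = (j + 1, l)
      rw [hl2]
  let E := Equiv.ofBijective e hbij
  rw [← Equiv.tsum_eq E]
  have hsummand : ∀ jm : ℕ × ℕ,
      (1 : ℝ) / 2 ^ (((E jm : ℕ × ℕ)).1 + ((E jm : ℕ × ℕ)).2)
        = ((2:ℝ)⁻¹) ^ (jm.1 + aFun p jm.1 + 1) * ((2:ℝ)⁻¹) ^ (p * jm.2) := by
    intro jm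
    have h1 : ((E jm : ℕ × ℕ)).1 = jm.1 + 1 := rfl
    have h2 : ((E jm : ℕ × ℕ)).2 = aFun p jm.1 + p * jm.2 := rfl
    have h3 : ((E jm : ℕ × ℕ)).1 + ((E jm : ℕ × ℕ)).2
        = (jm.1 + aFun p jm.1 + 1) + p * jm.2 := by rw [h1, h2]; ring
    rw [h3, one_div, ← inv_pow, pow_add]
  rw [tsum_congr hsummand]
  have hg : Summable fun j : ℕ => ((2:ℝ)⁻¹) ^ (j + aFun p j + 1) := by
    apply Summable.of_nonneg_of_le (fun j => by positivity) (fun j => ?_)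
      (summable_geometric_of_lt_one (by norm_num : (0:ℝ) ≤ 2⁻¹) (by norm_num))
    exact pow_le_pow_of_le_one (by norm_num) (by norm_num) (by omega)
  have hh : Summable fun m : ℕ => ((2:ℝ)⁻¹) ^ (p * m) := aux_geom_summable p hppos
  have hprod : Summable (fun jm : ℕ × ℕ =>
      ((2:ℝ)⁻¹) ^ (jm.1 + aFun p jm.1 + 1) * ((2:ℝ)⁻¹) ^ (p * jm.2)) :=
    Summable.mul_of_nonneg hg hh (fun j => by positivity) (fun m => by positivity)
  have hps := Summable.tsum_prod' hprod (fun j => hh.mul_left (((2:ℝ)⁻¹) ^ (j + aFun p j + 1)))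
  rw [hps]
  have hstep1 : ∀ j : ℕ, ∑' m : ℕ, ((2:ℝ)⁻¹) ^ (j + aFun p j + 1) * ((2:ℝ)⁻¹) ^ (p * m)
      = ((2:ℝ)⁻¹) ^ (j + aFun p j + 1) * (2 ^ p / (2 ^ p - 1)) := by
    intro j
    rw [tsum_mul_left, aux_geom p hppos]
  rw [tsum_congr hstep1, tsum_mul_right]
  -- reindex over residues mod r
  haveI : NeZero r := ⟨hrpos.ne'⟩
  have hjsum : ∑' j : ℕ, ((2:ℝ)⁻¹) ^ (j + aFun p j + 1)
      = (∑ i : Fin r, ((2:ℝ)⁻¹) ^ ((i : ℕ) + aFun p i + 1)) * (2 ^ r / (2 ^ r - 1)) := by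
    rw [← Equiv.tsum_eq (Nat.divModEquiv r).symm]
    have hterm : ∀ qi : ℕ × Fin r,
        ((2:ℝ)⁻¹) ^ ((((Nat.divModEquiv r).symm qi : ℕ))
            + aFun p ((Nat.divModEquiv r).symm qi) + 1)
        = ((2:ℝ)⁻¹) ^ ((qi.2 : ℕ) + aFun p qi.2 + 1) * ((2:ℝ)⁻¹) ^ (r * qi.1) := by
      rintro ⟨q, i⟩
      have hval : ((Nat.divModEquiv r).symm (q, i) : ℕ) = q * r + (i : ℕ) := rfl
      rw [hval, hper q i, ← pow_add]
      congr 1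
      ring
    rw [tsum_congr hterm]
    have hsum2 : Summable (fun qi : ℕ × Fin r =>
        ((2:ℝ)⁻¹) ^ ((qi.2 : ℕ) + aFun p qi.2 + 1) * ((2:ℝ)⁻¹) ^ (r * qi.1)) := by
      have hs := Summable.mul_of_nonneg (f := fun q : ℕ => ((2:ℝ)⁻¹) ^ (r * q))
        (g := fun i : Fin r => ((2:ℝ)⁻¹) ^ ((i : ℕ) + aFun p i + 1))
        (aux_geom_summable r hrpos) (Summable.of_finite)
        (fun q => by positivity) (fun i => by positivity)
      exact hs.congr (fun qi => mul_comm _ _)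
    have hps2 := Summable.tsum_prod' hsum2 (fun q : ℕ =>
      (Summable.of_finite (f := fun i : Fin r =>
        ((2:ℝ)⁻¹) ^ ((i : ℕ) + aFun p i + 1) * ((2:ℝ)⁻¹) ^ (r * q))))
    rw [hps2]
    have hstep2 : ∀ q : ℕ,
        ∑' i : Fin r, ((2:ℝ)⁻¹) ^ ((i : ℕ) + aFun p i + 1) * ((2:ℝ)⁻¹) ^ (r * q)
        = (∑ i : Fin r, ((2:ℝ)⁻¹) ^ ((i : ℕ) + aFun p i + 1)) * ((2:ℝ)⁻¹) ^ (r * q) := by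
      intro q
      rw [tsum_fintype, ← Finset.sum_mul]
    rw [tsum_congr hstep2, tsum_mul_left, aux_geom r hrpos]
  rw [hjsum]
  -- identify the finite sum with the sum over Lset
  have hL : ∀ i : ℕ, aFun p i + 1 ∈ Lset p := by
    intro i
    have h1 : 2 ≤ aFun p i + 1 := by have := ha1 i; omega
    have h2 : aFun p i + 1 ≤ p + 1 := by have := hap i; omega
    simp only [Lset, Finset.mem_filter, Finset.mem_Icc]
    exact ⟨⟨h1, h2⟩, ⟨i, (hpow i).symm⟩⟩
  have hrpx : ∀ i : ℕ, i < r → rpx p (aFun p i + 1) = i := by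
    intro i hir
    have hmem : i ∈ {r' : ℕ | (2 : ZMod p) ^ r' = ((aFun p i + 1 : ℕ) : ZMod p)} := by
      simp only [Set.mem_setOf_eq, hpow i]
    unfold rpx
    apply le_antisymm (Nat.sInf_le hmem)
    by_contra hlt
    push_neg at hlt
    have hinf := Nat.sInf_mem ⟨i, hmem⟩
    set s := sInf {r' : ℕ | (2 : ZMod p) ^ r' = ((aFun p i + 1 : ℕ) : ZMod p)} with hs
    rw [hpow i] at hinf
    have hone : (2 : ZMod p) ^ (i - s) = 1 := by
      have hpo : (2 : ZMod p) ^ s ≠ 0 := pow_ne_zero _ h2ne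
      apply mul_left_cancel₀ hpo
      rw [mul_one, ← pow_add, Nat.add_sub_cancel' (by omega : s ≤ i), hinf]
    have hdvd : r ∣ i - s := by rw [hrord]; exact orderOf_dvd_of_pow_eq_one hone
    have := Nat.le_of_dvd (by omega) hdvd
    omega
  have hfinsum : ∑ i : Fin r, ((2:ℝ)⁻¹) ^ ((i : ℕ) + aFun p i + 1)
      = ∑ x ∈ Lset p, (1:ℝ) / 2 ^ (x + rpx p x) := by
    apply Finset.sum_nbij' (i := fun a : Fin r => aFun p (a : ℕ) + 1)
      (j := fun y => (⟨rpx p y % r, Nat.mod_lt _ hrpos⟩ : Fin r))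
    · intro a _
      exact hL a
    · intro y _
      exact Finset.mem_univ _
    · intro a _
      apply Fin.ext
      show rpx p (aFun p (a : ℕ) + 1) % r = (a : ℕ)
      rw [hrpx a a.isLt, Nat.mod_eq_of_lt a.isLt]
    · intro y hy
      simp only [Lset, Finset.mem_filter, Finset.mem_Icc] at hy
      obtain ⟨⟨h2y, hyp⟩, i0, hi0⟩ := hy
      have hne : {r' : ℕ | (2 : ZMod p) ^ r' = (y : ZMod p)}.Nonempty := ⟨i0, hi0⟩
      have hinf : (2 : ZMod p) ^ (rpx p y) = (y : ZMod p) := Nat.sInf_mem hne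
      have hmod : (2 : ZMod p) ^ (rpx p y % r) = (y : ZMod p) := by
        rw [hrord, pow_mod_orderOf, hinf]
      show aFun p (rpx p y % r) + 1 = y
      unfold aFun
      rw [hmod]
      have hc : ((y - 2 : ℕ) : ZMod p) = (y : ZMod p) - 2 := by
        push_cast [Nat.cast_sub h2y]
        ring
      rw [← hc, ZMod.val_cast_of_lt (by omega : y - 2 < p)]
      omega
    · intro a _
      rw [hrpx a a.isLt, one_div, ← inv_pow]
      congr 1
      ring
  rw [hfinsum]
  ring
end

section
/- Let k be a field with char(k) ≠ 2, let Γ be a group, let m ≥ n be natural numbers, let T ∈ Mat(m×n, k[Γ]), and let I ∈ Mat(m×n, k) be a matrix with trivial kernel. Let C₂ = ⟨u⟩ be the cyclic group of order 2 and define S := I·diag_n((1−u)/2) + T·diag_n((1+u)/2) ∈ Mat(m×n, k[Γ×C₂]), where diag_n(x) is the n×n diagonal matrix with diagonal entries x. Then for every finite subset Φ ⊆ Γ one has dim_k ker(S_{Φ×C₂}) = dim_k ker(T_Φ). Consequently, for any Følner sequence (Φ_i) in Γ along which the kernel gradient of T exists and equals d, the kernel gradient of S along the Følner sequence (Φ_i×C₂)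 of Γ×C₂ exists and equals d/2. -/
open scoped Pointwise

/-- A Følner sequence. -/
def IsFolnerSeq {Λ : Type*} [Group Λ] (Φ : ℕ → Finset Λ) : Prop :=
  letI := Classical.decEq Λ
  (∀ i, (Φ i).Nonempty) ∧
    ∀ S : Finset Λ, Filter.Tendsto
      (fun i => ((((S ×ˢ Φ i).image fun p => p.1 * p.2) \ Φ i).card : ℝ) / ((Φ i).card : ℝ))
        Filter.atTop (nhds 0)

variable {k : Type*} [Field k] {Λ : Type*} [Group Λ]

/-- inclusion of k[Φ] into k[Λ] -/
noncomputable def spanIncl (Φ : Finset Λ) : (↥Φ → k) →ₗ[k] MonoidAlgebra k Λ where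
  toFun f := ∑ x : Φ, f x • MonoidAlgebra.single (x : Λ) (1 : k)
  map_add' f g := by simp [add_smul, Finset.sum_add_distrib]
  map_smul' c f := by simp [smul_smul, Finset.smul_sum]

/-- projection of k[Λ] onto k[Φ] -/
noncomputable def spanProj (Φ : Finset Λ) : MonoidAlgebra k Λ →ₗ[k] (↥Φ → k) where
  toFun f x := f.coeff (x : Λ)
  map_add' f g := by ext x; exact Finsupp.add_apply f.coeff g.coeff x
  map_smul' c f := by ext x; exact Finsupp.smul_apply c f.coeff x

/-- compression of a matrix over k[Λ] to a finite subset Φ -/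
noncomputable def compress {ι κ : Type*} [Fintype ι] [Fintype κ]
    (T : Matrix ι κ (MonoidAlgebra k Λ)) (Φ : Finset Λ) :
    (κ → (↥Φ → k)) →ₗ[k] (ι → (↥Φ → k)) :=
  LinearMap.pi fun i => (spanProj Φ).comp <|
    ∑ j : κ, (LinearMap.mulLeft k (T i j)).comp ((spanIncl Φ).comp (LinearMap.proj j))

/-- the kernel gradient of `T` along `Φ` exists and equals `r`. -/
noncomputable def HasKernelGradient {ι κ : Type*} [Fintype ι] [Fintype κ]
    (T : Matrix ι κ (MonoidAlgebra k Λ)) (Φ : ℕ → Finset Λ) (r : ℝ) : Prop :=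
  Filter.Tendsto
    (fun i => (Module.finrank k (LinearMap.ker (compress T (Φ i))) : ℝ) / ((Φ i).card : ℝ))
    Filter.atTop (nhds r)

abbrev C₂ : Type := Multiplicative (ZMod 2)

/-- the generator `u` of the cyclic group of order 2 -/
def ugen : C₂ := Multiplicative.ofAdd (1 : ZMod 2)

/-! Since `u` is central of order two and `2` is invertible, `k[Φ × C₂]` splits into the `±1`
eigenspaces of `u`, with coordinates `v(·,1) + v(·,u)` and `v(·,1) - v(·,u)`. The compression of
`S = A·(1-u)/2 + B·(1+u)/2` acts on these coordinates as the compression of `B` on the first and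
of `A` on the second, so `dim ker S_{Φ×C₂} = dim ker B_Φ + dim ker A_Φ`. For `A = I` constant and
injective the second summand vanishes. Since `|Φ × C₂| = 2|Φ|`, the kernel gradient halves. -/

open Finset

lemma Submodule.finrank_prod {K M N : Type*} [DivisionRing K] [AddCommGroup M] [Module K M]
    [AddCommGroup N] [Module K N] (p : Submodule K M) (q : Submodule K N)
    [FiniteDimensional K p] [FiniteDimensional K q] :
    Module.finrank K (p.prod q) = Module.finrank K p + Module.finrank K q := by
  have hinj : Function.Injective (p.subtype.prodMap q.subtype) :=
    Prod.map_injective.2 ⟨p.injective_subtype, q.injective_subtype⟩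
  calc Module.finrank K (p.prod q)
      = Module.finrank K (LinearMap.range (p.subtype.prodMap q.subtype)) := by
        rw [LinearMap.range_prodMap, Submodule.range_subtype, Submodule.range_subtype]
    _ = Module.finrank K (p × q) := (LinearEquiv.ofInjective _ hinj).finrank_eq.symm
    _ = _ := Module.finrank_prod

lemma coeff_mul_spanIncl (Φ : Finset Λ) (g : MonoidAlgebra k Λ) (f : ↥Φ → k) (y : Λ) :
    (g * spanIncl Φ f).coeff y = ∑ x : ↥Φ, g.coeff (y * (x : Λ)⁻¹) * f x := by
  simp [spanIncl, Finset.mul_sum, MonoidAlgebra.coeff_sum]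

lemma compress_apply {ι κ : Type*} [Fintype ι] [Fintype κ]
    (T : Matrix ι κ (MonoidAlgebra k Λ)) (Φ : Finset Λ) (v : κ → ↥Φ → k) (i : ι) (x : ↥Φ) :
    compress T Φ v i x = ∑ j, ∑ y : ↥Φ, (T i j).coeff ((x : Λ) * (y : Λ)⁻¹) * v j y := by
  simp [compress, spanProj, MonoidAlgebra.coeff_sum, coeff_mul_spanIncl]

section ConstantMatrix

variable {ι κ : Type*} [Fintype ι] [Fintype κ]

lemma compress_map_single_one_apply (I : Matrix ι κ k) (Φ : Finset Λ) (v : κ → ↥Φ → k) (i : ι)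
    (x : ↥Φ) :
    compress (I.map (MonoidAlgebra.single 1)) Φ v i x = I.mulVec (fun j => v j x) i := by
  classical
  refine (compress_apply _ _ _ _ _).trans (Finset.sum_congr rfl fun j _ => ?_)
  have hx : ∀ y : ↥Φ, (1 = (x : Λ) * (y : Λ)⁻¹) ↔ y = x := by
    intro y; rw [eq_comm, mul_inv_eq_one, Subtype.ext_iff, eq_comm]
  simp [MonoidAlgebra.coeff_single, Finsupp.single_apply, hx]

lemma ker_compress_map_single_one {I : Matrix ι κ k} (hI : LinearMap.ker I.mulVecLin = ⊥)
    (Φ : Finset Λ) : LinearMap.ker (compress (I.map (MonoidAlgebra.single 1)) Φ) = ⊥ := by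
  rw [LinearMap.ker_eq_bot] at hI ⊢
  intro v w hvw
  ext j x
  refine congrFun (hI (a₁ := fun j => v j x) (a₂ := fun j => w j x) (funext fun i => ?_)) j
  simpa only [Matrix.mulVecLin_apply, compress_map_single_one_apply] using
    congrFun (congrFun hvw i) x

end ConstantMatrix

lemma ugen_ne_one : ugen ≠ 1 := by decide

lemma ugen_inv : ugen⁻¹ = ugen := by decide

lemma ugen_mul_self : ugen * ugen = 1 := by decide

lemma eq_one_or_eq_ugen (c : C₂) : c = 1 ∨ c = ugen := by
  revert c; decide

lemma sum_C₂ {M : Type*} [AddCommMonoid M] (f : C₂ → M) : ∑ c, f c = f 1 + f ugen := by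
  rw [show (univ : Finset C₂) = {1, ugen} by decide, sum_pair ugen_ne_one.symm]

section Doubling

variable (Φ : Finset Λ)

local notation "ε" => MonoidAlgebra.mapDomain (fun g : Λ => (g, (1 : C₂)))

omit [Group Λ] in
def prodUnivMk {H : Type*} [Fintype H] (c : H) (x : ↥Φ) : ↥(Φ ×ˢ (univ : Finset H)) :=
  ⟨((x : Λ), c), mem_product.2 ⟨x.2, mem_univ c⟩⟩

omit [Group Λ] in
lemma sum_prodUniv {H M : Type*} [Fintype H] [AddCommMonoid M]
    (f : ↥(Φ ×ˢ (univ : Finset H)) → M) :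
    ∑ z, f z = ∑ x : ↥Φ, ∑ c, f (prodUnivMk Φ c x) := by
  let e : ↥Φ × H ≃ ↥(Φ ×ˢ (univ : Finset H)) :=
    { toFun p := prodUnivMk Φ p.2 p.1
      invFun z := (⟨z.1.1, (mem_product.1 z.2).1⟩, z.1.2)
      left_inv _ := rfl
      right_inv _ := rfl }
  rw [← Fintype.sum_prod_type', ← e.sum_comp]
  rfl

variable (k) in
omit [Group Λ] in
noncomputable def sumDiffEquiv (h2 : (2 : k) ≠ 0) (κ : Type*) :
    (κ → ↥(Φ ×ˢ (univ : Finset C₂)) → k) ≃ₗ[k] (κ → ↥Φ → k) × (κ → ↥Φ → k) where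
  toFun v := (fun j x => v j (prodUnivMk Φ 1 x) + v j (prodUnivMk Φ ugen x),
    fun j x => v j (prodUnivMk Φ 1 x) - v j (prodUnivMk Φ ugen x))
  map_add' v w := by ext <;> simp only [Pi.add_apply, Prod.fst_add, Prod.snd_add] <;> ring
  map_smul' r v := by
    ext <;> simp only [Pi.smul_apply, smul_eq_mul, RingHom.id_apply, Prod.smul_fst,
      Prod.smul_snd] <;> ring
  invFun p j z :=
    let x : ↥Φ := ⟨z.1.1, (mem_product.1 z.2).1⟩
    if z.1.2 = 1 then 2⁻¹ * (p.1 j x + p.2 j x) else 2⁻¹ * (p.1 j x - p.2 j x)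
  left_inv v := by
    ext j ⟨⟨x, c⟩, hz⟩
    rcases eq_one_or_eq_ugen c with rfl | rfl <;>
      simp [prodUnivMk, ugen_ne_one] <;> field_simp <;> ring
  right_inv p := by
    ext j x <;> simp [prodUnivMk, ugen_ne_one] <;> field_simp <;> ring

variable (k Λ) in
noncomputable def plusIdem : MonoidAlgebra k (Λ × C₂) :=
  (2 : k)⁻¹ • (1 + MonoidAlgebra.single (1, ugen) 1)

variable (k Λ) in
noncomputable def minusIdem : MonoidAlgebra k (Λ × C₂) :=
  (2 : k)⁻¹ • (1 - MonoidAlgebra.single (1, ugen) 1)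

omit [Group Λ] in
lemma coeff_mapDomain_inl (a : MonoidAlgebra k Λ) (g : Λ) (c : C₂) :
    (ε a).coeff (g, c) = if c = 1 then a.coeff g else 0 := by
  split_ifs with hc
  · subst hc
    exact Finsupp.mapDomain_apply (fun _ _ h => congrArg Prod.fst h) a.coeff g
  · exact Finsupp.mapDomain_of_notMem_range _ _ fun ⟨_, h⟩ => hc (congrArg Prod.snd h).symm

lemma coeff_entry_one (a b : MonoidAlgebra k Λ) (g : Λ) :
    (ε a * minusIdem k Λ + ε b * plusIdem k Λ).coeff (g, 1) = 2⁻¹ * (a.coeff g + b.coeff g) := by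
  simp [minusIdem, plusIdem, mul_add, mul_sub, MonoidAlgebra.coeff_sub, coeff_mapDomain_inl,
    ugen_inv, ugen_ne_one, -MonoidAlgebra.coeff_mapDomain]

lemma coeff_entry_ugen (a b : MonoidAlgebra k Λ) (g : Λ) :
    (ε a * minusIdem k Λ + ε b * plusIdem k Λ).coeff (g, ugen) =
      2⁻¹ * (b.coeff g - a.coeff g) := by
  simp [minusIdem, plusIdem, mul_add, mul_sub, MonoidAlgebra.coeff_sub, coeff_mapDomain_inl,
    ugen_inv, ugen_ne_one, ugen_mul_self, -MonoidAlgebra.coeff_mapDomain]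
  ring

lemma compress_prodUniv_apply {ι κ : Type*} [Fintype ι] [Fintype κ]
    (S : Matrix ι κ (MonoidAlgebra k (Λ × C₂))) (v : κ → ↥(Φ ×ˢ (univ : Finset C₂)) → k) (i : ι)
    (x : ↥Φ) (c : C₂) :
    compress S (Φ ×ˢ univ) v i (prodUnivMk Φ c x) =
      ∑ j, ∑ y : ↥Φ, ((S i j).coeff ((x : Λ) * (y : Λ)⁻¹, c) * v j (prodUnivMk Φ 1 y) +
        (S i j).coeff ((x : Λ) * (y : Λ)⁻¹, c * ugen) * v j (prodUnivMk Φ ugen y)) := by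
  simp only [compress_apply, sum_prodUniv Φ, sum_C₂]
  simp [prodUnivMk, Prod.inv_mk, ugen_inv]

variable {ι κ : Type*} [Fintype ι] [Fintype κ] [DecidableEq κ]
  {A B : Matrix ι κ (MonoidAlgebra k Λ)} {S : Matrix ι κ (MonoidAlgebra k (Λ × C₂))}

lemma sumDiffEquiv_compress_prodUniv (h2 : (2 : k) ≠ 0)
    (hS : S = A.map ε * Matrix.diagonal (fun _ => minusIdem k Λ) +
      B.map ε * Matrix.diagonal (fun _ => plusIdem k Λ))
    (v : κ → ↥(Φ ×ˢ (univ : Finset C₂)) → k) :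
    sumDiffEquiv k Φ h2 ι (compress S (Φ ×ˢ univ) v) =
      (compress B Φ).prodMap (compress A Φ) (sumDiffEquiv k Φ h2 κ v) := by
  have hSij : ∀ i j, S i j = ε (A i j) * minusIdem k Λ + ε (B i j) * plusIdem k Λ := by
    intro i j
    rw [hS, Matrix.add_apply]
    exact congrArg₂ (· + ·) (Matrix.mul_diagonal ..) (Matrix.mul_diagonal ..)
  refine Prod.ext (funext₂ fun i x => ?_) (funext₂ fun i x => ?_) <;>
  simp only [sumDiffEquiv, LinearEquiv.coe_mk, LinearMap.coe_mk, AddHom.coe_mk,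
    LinearMap.prodMap_apply, compress_prodUniv_apply] <;>
  simp only [compress_apply, hSij, coeff_entry_one, coeff_entry_ugen, ugen_mul_self, one_mul,
    ← sum_add_distrib, ← sum_sub_distrib] <;>
  exact sum_congr rfl fun j _ => sum_congr rfl fun y _ => by field_simp; ring

lemma finrank_ker_compress_prodUniv (h2 : (2 : k) ≠ 0)
    (hS : S = A.map ε * Matrix.diagonal (fun _ => minusIdem k Λ) +
      B.map ε * Matrix.diagonal (fun _ => plusIdem k Λ)) :
    Module.finrank k (LinearMap.ker (compress S (Φ ×ˢ univ))) =
      Module.finrank k (LinearMap.ker (compress B Φ)) +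
        Module.finrank k (LinearMap.ker (compress A Φ)) := by
  have hconj : (sumDiffEquiv k Φ h2 ι).toLinearMap ∘ₗ compress S (Φ ×ˢ univ) =
      (compress B Φ).prodMap (compress A Φ) ∘ₗ (sumDiffEquiv k Φ h2 κ).toLinearMap :=
    LinearMap.ext (sumDiffEquiv_compress_prodUniv Φ h2 hS)
  have hker : LinearMap.ker (compress S (Φ ×ˢ univ)) =
      (LinearMap.ker ((compress B Φ).prodMap (compress A Φ))).comap
        (sumDiffEquiv k Φ h2 κ).toLinearMap := by
    rw [← LinearEquiv.ker_comp (sumDiffEquiv k Φ h2 ι), hconj, LinearMap.ker_comp]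
  rw [hker, Submodule.comap_equiv_eq_map_symm, LinearEquiv.finrank_map_eq,
    LinearMap.ker_prodMap, Submodule.finrank_prod]

end Doubling

lemma card_boundary_prod_univ_le {Γ H : Type*} [Group Γ] [Group H] [Fintype H] [DecidableEq Γ]
    [DecidableEq (Γ × H)] (Ψ : Finset (Γ × H)) (Φ : Finset Γ) :
    #(((Ψ ×ˢ (Φ ×ˢ univ)).image fun p => p.1 * p.2) \ (Φ ×ˢ univ)) ≤
      #(((Ψ.image Prod.fst ×ˢ Φ).image fun p => p.1 * p.2) \ Φ) * Fintype.card H := by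
  rw [← card_univ, ← card_product]
  refine card_le_card fun a ha => ?_
  simp only [mem_sdiff, mem_image, mem_product, mem_univ, and_true, Prod.exists] at ha ⊢
  obtain ⟨⟨g, h, x, c, ⟨hg, hx⟩, rfl⟩, hnot⟩ := ha
  exact ⟨⟨g, x, ⟨⟨g, h, hg, rfl⟩, hx⟩, rfl⟩, hnot⟩

lemma IsFolnerSeq.prod_univ {Γ H : Type*} [Group Γ] [Group H] [Fintype H] {Φ : ℕ → Finset Γ}
    (hΦ : IsFolnerSeq Φ) : IsFolnerSeq fun i => Φ i ×ˢ (univ : Finset H) := by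
  -- the decidability instances `IsFolnerSeq` is stated with
  let _ := Classical.decEq Γ
  let _ := Classical.decEq (Γ × H)
  obtain ⟨hne, hconv⟩ := hΦ
  refine ⟨fun i => (hne i).product univ_nonempty, fun Ψ => ?_⟩
  refine squeeze_zero (fun i => by positivity) (fun i => ?_) (hconv (Ψ.image Prod.fst))
  have hH : (0 : ℝ) < Fintype.card H := by exact_mod_cast Fintype.card_pos
  dsimp only
  rw [card_product, card_univ, Nat.cast_mul, mul_comm, ← div_div]
  gcongr
  rw [div_le_iff₀ hH]
  exact_mod_cast card_boundary_prod_univ_le Ψ (Φ i)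

lemma HasKernelGradient.prod_univ {ι κ H : Type*} [Fintype ι] [Fintype κ] [Group H] [Fintype H]
    {T : Matrix ι κ (MonoidAlgebra k Λ)} {S : Matrix ι κ (MonoidAlgebra k (Λ × H))}
    {Φ : ℕ → Finset Λ} {d : ℝ}
    (hST : ∀ Φ : Finset Λ, Module.finrank k (LinearMap.ker (compress S (Φ ×ˢ univ))) =
      Module.finrank k (LinearMap.ker (compress T Φ)))
    (hT : HasKernelGradient T Φ d) :
    HasKernelGradient S (fun i => Φ i ×ˢ univ) (d / Fintype.card H) := by
  refine (hT.div_const _).congr fun i => ?_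
  rw [hST, card_product, card_univ, Nat.cast_mul, div_div]

theorem statement11_general (k : Type) [Field k] (hchar : ringChar k ≠ 2) (Γ : Type) [Group Γ]
    (m n : ℕ) (T : Matrix (Fin m) (Fin n) (MonoidAlgebra k Γ))
    (I : Matrix (Fin m) (Fin n) k) (hI : LinearMap.ker I.mulVecLin = ⊥)
    (S : Matrix (Fin m) (Fin n) (MonoidAlgebra k (Γ × C₂)))
    (hS : S =
      (I.map fun c => MonoidAlgebra.single (1 : Γ × C₂) c) *
          Matrix.diagonal (fun _ : Fin n =>
            (2 : k)⁻¹ • ((1 : MonoidAlgebra k (Γ × C₂)) -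
              MonoidAlgebra.single ((1 : Γ), ugen) (1 : k))) +
        (T.map (fun f => MonoidAlgebra.mapDomain (fun g : Γ => (g, (1 : C₂))) f) :
            Matrix (Fin m) (Fin n) (MonoidAlgebra k (Γ × C₂))) *
          Matrix.diagonal (fun _ : Fin n =>
            (2 : k)⁻¹ • ((1 : MonoidAlgebra k (Γ × C₂)) +
              MonoidAlgebra.single ((1 : Γ), ugen) (1 : k)))) :
    (∀ Φ : Finset Γ,
      Module.finrank k (LinearMap.ker (compress S (Φ ×ˢ (Finset.univ : Finset C₂)))) =
        Module.finrank k (LinearMap.ker (compress T Φ))) ∧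
    ∀ (Φ : ℕ → Finset Γ) (d : ℝ), IsFolnerSeq Φ → HasKernelGradient T Φ d →
      IsFolnerSeq (fun i => Φ i ×ˢ (Finset.univ : Finset C₂)) ∧
        HasKernelGradient S (fun i => Φ i ×ˢ (Finset.univ : Finset C₂)) (d / 2) := by
  have hS' : S = (I.map (MonoidAlgebra.single 1)).map
        (MonoidAlgebra.mapDomain fun g : Γ => (g, (1 : C₂))) *
        Matrix.diagonal (fun _ => minusIdem k Γ) +
      T.map (MonoidAlgebra.mapDomain fun g : Γ => (g, (1 : C₂))) *
        Matrix.diagonal (fun _ => plusIdem k Γ) := by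
    rw [hS, Matrix.map_map]
    simp only [Function.comp_def, MonoidAlgebra.mapDomain_single]
    rfl
  have hker : ∀ Φ : Finset Γ,
      Module.finrank k (LinearMap.ker (compress S (Φ ×ˢ (Finset.univ : Finset C₂)))) =
        Module.finrank k (LinearMap.ker (compress T Φ)) := fun Φ => by
    rw [finrank_ker_compress_prodUniv Φ (Ring.two_ne_zero hchar) hS',
      ker_compress_map_single_one hI, finrank_bot, add_zero]
  refine ⟨hker, fun Φ d hΦ hT => ⟨hΦ.prod_univ, ?_⟩⟩
  simpa using hT.prod_univ hker

/-- with `S := I·diag_n((1−u)/2) + T·diag_n((1+u)/2)` over `k[Γ×C₂]`, one has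
`dim_k ker(S_{Φ×C₂}) = dim_k ker(T_Φ)` for all finite `Φ ⊆ Γ`; consequently, if the kernel
gradient of `T` along a Følner sequence `(Φ_i)` equals `d`, then `(Φ_i × C₂)` is a Følner
sequence of `Γ×C₂` along which the kernel gradient of `S` equals `d/2`. -/
theorem statement11 (k : Type) [Field k] (hchar : ringChar k ≠ 2) (Γ : Type) [Group Γ]
    (m n : ℕ) (hmn : n ≤ m) (T : Matrix (Fin m) (Fin n) (MonoidAlgebra k Γ))
    (I : Matrix (Fin m) (Fin n) k) (hI : LinearMap.ker I.mulVecLin = ⊥)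
    (S : Matrix (Fin m) (Fin n) (MonoidAlgebra k (Γ × C₂)))
    (hS : S =
      (I.map fun c => MonoidAlgebra.single (1 : Γ × C₂) c) *
          Matrix.diagonal (fun _ : Fin n =>
            (2 : k)⁻¹ • ((1 : MonoidAlgebra k (Γ × C₂)) -
              MonoidAlgebra.single ((1 : Γ), ugen) (1 : k))) +
        (T.map (fun f => MonoidAlgebra.mapDomain (fun g : Γ => (g, (1 : C₂))) f) :
            Matrix (Fin m) (Fin n) (MonoidAlgebra k (Γ × C₂))) *
          Matrix.diagonal (fun _ : Fin n =>
            (2 : k)⁻¹ • ((1 : MonoidAlgebra k (Γ × C₂)) +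
              MonoidAlgebra.single ((1 : Γ), ugen) (1 : k)))) :
    (∀ Φ : Finset Γ,
      Module.finrank k (LinearMap.ker (compress S (Φ ×ˢ (Finset.univ : Finset C₂)))) =
        Module.finrank k (LinearMap.ker (compress T Φ))) ∧
    ∀ (Φ : ℕ → Finset Γ) (d : ℝ), IsFolnerSeq Φ → HasKernelGradient T Φ d →
      IsFolnerSeq (fun i => Φ i ×ˢ (Finset.univ : Finset C₂)) ∧
        HasKernelGradient S (fun i => Φ i ×ˢ (Finset.univ : Finset C₂)) (d / 2) :=
  statement11_general k hchar Γ m n T I hI S hS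
end

section
/- Let Γ and A be countable groups, let Γ act on A by group automorphisms, let (Φ_j) be a Følner sequence in Γ, and let (F_i) be a Følner sequence in A. Then there exists a subsequence (F_{i(j)}) of (F_i) such that the sets Φ_j·F_{i(j)} := {γ·a : γ ∈ Φ_j, a ∈ F_{i(j)}} (products taken in the semidirect product Γ⋉A, where Γ and A are identified with their canonical images in Γ⋉A) form a Følner sequence in Γ⋉A. -/
open scoped Pointwise

variable {k : Type*} [Field k] {Λ : Type*} [Group Λ]

/-! Left translation by `g = (a, γ)` carries the fibre `δ · F` of `Φ · F` onto the fibre over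
`γδ`, twisted by `c_{γδ} = φ(γδ)⁻¹(a) ∈ A`. Hence `g(Φ·F) \ Φ·F` has at most `|γΦ \ Φ| · |F|`
elements in fibres leaving `Φ`, plus `∑_{δ ∈ Φ} |c_δ F \ F|` in the others. Enumerating
`A = {e 0, e 1, …}`, pick `F_{i(j)}` so that each of the finitely many `φ(δ)⁻¹(e m)` with
`δ ∈ Φ_j`, `m ≤ j` moves at most a `1/(j+1)` fraction of it; the Følner ratio of `g` on
`Φ_j · F_{i(j)}` is then at most that of `γ` on `Φ_j` plus `1/(j+1)`. -/

open Filter Finset SemidirectProduct Function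
open scoped Pointwise Topology

section Folner

variable [DecidableEq Λ]

theorem card_mul_sdiff_le (S E : Finset Λ) : #((S * E) \ E) ≤ ∑ s ∈ S, #(s • E \ E) := by
  refine (card_le_card fun x hx => ?_).trans card_biUnion_le
  obtain ⟨hmul, hx⟩ := mem_sdiff.1 hx
  obtain ⟨s, hs, y, hy, rfl⟩ := mem_mul.1 hmul
  exact mem_biUnion.2 ⟨s, hs, mem_sdiff.2 ⟨smul_mem_smul_finset hy, hx⟩⟩

theorem isFolnerSeq_iff {E : ℕ → Finset Λ} :
    IsFolnerSeq E ↔ (∀ i, (E i).Nonempty) ∧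
      ∀ g : Λ, Tendsto (fun i => (#(g • E i \ E i) : ℝ) / #(E i)) atTop (𝓝 0) := by
  have hdef : IsFolnerSeq E ↔ (∀ i, (E i).Nonempty) ∧
      ∀ S : Finset Λ, Tendsto (fun i => (#((S * E i) \ E i) : ℝ) / #(E i)) atTop (𝓝 0) := by
    simp only [IsFolnerSeq, Finset.mul_def]
    congr!
  rw [hdef]
  refine and_congr_right fun hne => ⟨fun h g => by simpa [singleton_mul] using h {g}, fun h S => ?_⟩
  have hsum := tendsto_finsetSum S fun g _ => h g
  rw [sum_const_zero] at hsum
  refine squeeze_zero (fun i => by positivity) (fun i => ?_) hsum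
  rw [← sum_div]
  gcongr
  exact_mod_cast card_mul_sdiff_le S (E i)

theorem IsFolnerSeq.eventually_card_smul_sdiff_le {E : ℕ → Finset Λ} (hE : IsFolnerSeq E)
    (C : Finset Λ) {ε : ℝ} (hε : 0 < ε) :
    ∀ᶠ i in atTop, ∀ c ∈ C, (#(c • E i \ E i) : ℝ) ≤ ε * #(E i) := by
  rw [isFolnerSeq_iff] at hE
  refine eventually_all_finset C |>.2 fun c _ => ?_
  filter_upwards [(hE.2 c).eventually_lt_const hε] with i hi
  rw [div_lt_iff₀ (by exact_mod_cast (hE.1 i).card_pos)] at hi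
  exact hi.le

end Folner

namespace SemidirectProduct

variable {Γ A : Type*} [Group Γ] [Group A] {φ : Γ →* MulAut A}

theorem inr_mul_inl_injective : Injective fun p : Γ × A => (inr p.1 * inl p.2 : A ⋊[φ] Γ) := by
  intro p q h
  have hr := congrArg right h
  have hl := congrArg left h
  simp only [mul_right, right_inr, right_inl, mul_one, mul_left, left_inr, left_inl,
    one_mul] at hr hl
  rw [hr] at hl
  exact Prod.ext hr ((φ q.1).injective hl)

theorem mul_inr_mul_inl (g : A ⋊[φ] Γ) (γ : Γ) (a : A) :
    g * (inr γ * inl a) = inr (g.right * γ) * inl (φ (g.right * γ)⁻¹ g.left * a) := by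
  ext <;> simp [map_mul, mul_assoc]

variable [DecidableEq Γ] [DecidableEq A] [DecidableEq (A ⋊[φ] Γ)]

theorem card_smul_image_sdiff_le (Φ : Finset Γ) (F : Finset A) (g : A ⋊[φ] Γ) :
    #(g • (Φ ×ˢ F).image (fun p => (inr p.1 * inl p.2 : A ⋊[φ] Γ)) \
        (Φ ×ˢ F).image fun p => inr p.1 * inl p.2)
      ≤ #(g.right • Φ \ Φ) * #F + ∑ δ ∈ Φ, #(φ δ⁻¹ g.left • F \ F) := by
  set ι : Γ × A → A ⋊[φ] Γ := fun p => inr p.1 * inl p.2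
  set c : Γ → A := fun δ => φ δ⁻¹ g.left
  have hsub : g • (Φ ×ˢ F).image ι \ (Φ ×ˢ F).image ι ⊆
      ((g.right • Φ \ Φ) ×ˢ F).image (fun p => ι (p.1, c p.1 * p.2)) ∪
        Φ.biUnion fun δ => (c δ • F \ F).image fun b => ι (δ, b) := by
    intro x hx
    obtain ⟨hgE, hxE⟩ := mem_sdiff.1 hx
    obtain ⟨_, hp, rfl⟩ := mem_smul_finset.1 hgE
    obtain ⟨⟨γ, a⟩, hγa, rfl⟩ := mem_image.1 hp
    obtain ⟨hγ, ha⟩ := mem_product.1 hγa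
    have hg : g • ι (γ, a) = ι (g.right * γ, c (g.right * γ) * a) := mul_inr_mul_inl g γ a
    rw [hg] at hxE ⊢
    by_cases hδ : g.right * γ ∈ Φ
    · refine mem_union_right _ (mem_biUnion.2 ⟨_, hδ, mem_image_of_mem _ ?_⟩)
      exact mem_sdiff.2 ⟨smul_mem_smul_finset ha,
        fun hF => hxE (mem_image_of_mem _ (mem_product.2 ⟨hδ, hF⟩))⟩
    · refine mem_union_left _ (mem_image.2 ⟨(g.right * γ, a), ?_, rfl⟩)
      exact mem_product.2 ⟨mem_sdiff.2 ⟨smul_mem_smul_finset hγ, hδ⟩, ha⟩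
  calc _ ≤ _ := card_le_card hsub
    _ ≤ _ := card_union_le _ _
    _ ≤ _ := by
      gcongr
      · exact card_image_le.trans (card_product _ _).le
      · exact card_biUnion_le.trans (sum_le_sum fun δ _ => card_image_le)

theorem card_smul_image_sdiff_div_le {Φ : Finset Γ} {F : Finset A} (hΦ : Φ.Nonempty)
    (hF : F.Nonempty) (g : A ⋊[φ] Γ) {ε : ℝ}
    (hε : ∀ δ ∈ Φ, (#(φ δ⁻¹ g.left • F \ F) : ℝ) ≤ ε * #F) :
    (#(g • (Φ ×ˢ F).image (fun p => (inr p.1 * inl p.2 : A ⋊[φ] Γ)) \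
        (Φ ×ˢ F).image fun p => inr p.1 * inl p.2) : ℝ) /
      #((Φ ×ˢ F).image fun p => (inr p.1 * inl p.2 : A ⋊[φ] Γ))
      ≤ (#(g.right • Φ \ Φ) : ℝ) / #Φ + ε := by
  have hΦpos : (0 : ℝ) < #Φ := by exact_mod_cast hΦ.card_pos
  have hFpos : (0 : ℝ) < #F := by exact_mod_cast hF.card_pos
  rw [card_image_of_injective _ inr_mul_inl_injective, card_product, Nat.cast_mul,
    div_le_iff₀ (by positivity)]
  calc _ ≤ (#(g.right • Φ \ Φ) * #F + ∑ δ ∈ Φ, #(φ δ⁻¹ g.left • F \ F) : ℝ) := by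
        exact_mod_cast card_smul_image_sdiff_le Φ F g
    _ ≤ #(g.right • Φ \ Φ) * #F + ∑ _δ ∈ Φ, ε * #F := by
        push_cast
        gcongr with δ hδ
        exact hε δ hδ
    _ = _ := by
        rw [sum_const, nsmul_eq_mul]
        field_simp

end SemidirectProduct

theorem statement12_general (Γ A : Type) [Group Γ] [Group A] [Countable A]
    (φ : Γ →* MulAut A) (Φ : ℕ → Finset Γ) (F : ℕ → Finset A)
    (hΦ : IsFolnerSeq Φ) (hF : IsFolnerSeq F) :
    ∃ i : ℕ → ℕ, StrictMono i ∧
      IsFolnerSeq (fun j =>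
        letI := Classical.decEq (SemidirectProduct A Γ φ)
        (Φ j ×ˢ F (i j)).image fun p =>
          (SemidirectProduct.inr p.1 * SemidirectProduct.inl p.2 :
            SemidirectProduct A Γ φ)) := by
  classical
  -- the instance of the statement, not the one `classical` derives from `Γ` and `A`
  let := Classical.decEq (A ⋊[φ] Γ)
  obtain ⟨e, he⟩ := exists_surjective_nat A
  have hsmall : ∀ j : ℕ, ∀ᶠ n in atTop,
      ∀ c ∈ (Φ j ×ˢ range (j + 1)).image (fun p => φ p.1⁻¹ (e p.2)),
        (#(c • F n \ F n) : ℝ) ≤ 1 / (j + 1) * #(F n) :=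
    fun j => hF.eventually_card_smul_sdiff_le _ Nat.one_div_pos_of_nat
  obtain ⟨i, hi, hiF⟩ := extraction_forall_of_eventually hsmall
  refine ⟨i, hi, isFolnerSeq_iff.2
    ⟨fun j => ((hΦ.1 j).product (hF.1 (i j))).image _, fun g => ?_⟩⟩
  obtain ⟨m, hm⟩ := he g.left
  have hbound : Tendsto (fun j : ℕ => (#(g.right • Φ j \ Φ j) : ℝ) / #(Φ j) + 1 / (j + 1))
      atTop (𝓝 0) := by
    simpa using ((isFolnerSeq_iff.1 hΦ).2 g.right).add tendsto_one_div_add_atTop_nhds_zero_nat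
  refine squeeze_zero' (.of_forall fun j => by positivity) ?_ hbound
  filter_upwards [eventually_ge_atTop m] with j hj
  refine card_smul_image_sdiff_div_le (hΦ.1 j) (hF.1 (i j)) g fun δ hδ => hiF j _ ?_
  exact mem_image.2 ⟨(δ, m), mem_product.2 ⟨hδ, mem_range.2 (by omega)⟩, by rw [hm]⟩

/-- if `(Φ_j)` is a Følner sequence in `Γ`, `(F_i)` one in `A`, and `Γ` acts
on `A` by automorphisms, then for a suitable subsequence `(F_{i(j)})` the sets
`Φ_j · F_{i(j)}` form a Følner sequence in the semidirect product `Γ⋉A = A ⋊[φ] Γ`. -/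
theorem statement12 (Γ A : Type) [Group Γ] [Group A] [Countable Γ] [Countable A]
    (φ : Γ →* MulAut A) (Φ : ℕ → Finset Γ) (F : ℕ → Finset A)
    (hΦ : IsFolnerSeq Φ) (hF : IsFolnerSeq F) :
    ∃ i : ℕ → ℕ, StrictMono i ∧
      IsFolnerSeq (fun j =>
        letI := Classical.decEq (SemidirectProduct A Γ φ)
        (Φ j ×ˢ F (i j)).image fun p =>
          (SemidirectProduct.inr p.1 * SemidirectProduct.inl p.2 :
            SemidirectProduct A Γ φ)) :=
  statement12_general Γ A φ Φ F hΦ hF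
end

section
/- Let A be an abelian group in which every element has order dividing 2, let k be a field with char(k) ≠ 2, and let ρ : ℤ[1/2][A] → k[A] be the map on group rings induced by the canonical ring homomorphism ℤ[1/2] → k. If p ∈ ℤ[1/2][A] satisfies p² = p and p ≠ 0, then ρ(p) ≠ 0. -/
/-!
If `ρ p = 0`, every coefficient of `p` lies in the proper ideal `I = ker c`. Since `p = p ^ n`,
the coefficients then lie in `I ^ n` for every `n`, and `ℤ[1/2]`, a localization of `ℤ`, is a
Noetherian domain, so Krull's intersection theorem forces `p = 0`.
-/

namespace MonoidAlgebra

variable {R : Type*} [CommRing R] {M : Type*} [Monoid M]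

theorem coeff_mul_mem_mul {I J : Ideal R} {x y : MonoidAlgebra R M}
    (hx : ∀ m, x.coeff m ∈ I) (hy : ∀ m, y.coeff m ∈ J) (m : M) :
    (x * y).coeff m ∈ I * J := by
  classical
  rw [coeff_mul]
  refine Ideal.sum_mem _ fun m₁ _ ↦ Ideal.sum_mem _ fun m₂ _ ↦ ?_
  dsimp only
  split_ifs
  · exact Ideal.mul_mem_mul (hx m₁) (hy m₂)
  · exact zero_mem _

theorem coeff_mem_pow_of_isIdempotentElem {I : Ideal R} {p : MonoidAlgebra R M}
    (hp : IsIdempotentElem p) (hI : ∀ m, p.coeff m ∈ I) (n : ℕ) (m : M) :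
    p.coeff m ∈ I ^ (n + 1) := by
  induction n generalizing m with
  | zero => simpa using hI m
  | succ n ih => rw [← hp.eq, pow_succ]; exact coeff_mul_mem_mul ih hI m

theorem eq_zero_of_isIdempotentElem_of_coeff_mem [IsNoetherianRing R] [IsDomain R] {I : Ideal R}
    (hI : I ≠ ⊤) {p : MonoidAlgebra R M} (hp : IsIdempotentElem p) (hpI : ∀ m, p.coeff m ∈ I) :
    p = 0 := by
  refine coeff_eq_zero.mp (Finsupp.ext fun m ↦ ?_)
  have hmem : p.coeff m ∈ ⨅ n : ℕ, I ^ n := Ideal.mem_iInf.mpr fun n ↦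
    Ideal.pow_le_pow_right n.le_succ (coeff_mem_pow_of_isIdempotentElem hp hpI n m)
  simpa [Ideal.iInf_pow_eq_bot_of_isDomain I hI] using hmem

theorem mapRingHom_ne_zero_of_isIdempotentElem [IsNoetherianRing R] [IsDomain R] {S : Type*}
    [Semiring S] [Nontrivial S] (f : R →+* S) {p : MonoidAlgebra R M} (hp : IsIdempotentElem p)
    (hp0 : p ≠ 0) : mapRingHom M f p ≠ 0 := by
  intro h
  refine hp0 (eq_zero_of_isIdempotentElem_of_coeff_mem (RingHom.ker_ne_top f) hp fun m ↦ ?_)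
  simpa using congr($h |>.coeff m)

end MonoidAlgebra

theorem Zhalf.coe_two : ((2 : Zhalf) : ℚ) = 2 := rfl

instance Zhalf.isLocalization_away_two : IsLocalization.Away (2 : ℤ) Zhalf := by
  refine .mk 2 ?_ ?_ ?_
  · refine ⟨⟨2, ⟨1 / 2, 1, 1, by norm_num⟩, ?_, ?_⟩, rfl⟩ <;> ext <;> norm_num [Zhalf.coe_two]
  · rintro ⟨_, m, n, rfl⟩
    exact ⟨n, m, Subtype.ext (by simp [Zhalf.coe_two])⟩
  · intro a b h
    exact ⟨0, by simpa using h⟩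

instance Zhalf.isNoetherianRing : IsNoetherianRing Zhalf :=
  IsLocalization.isNoetherianRing (Submonoid.powers (2 : ℤ)) Zhalf inferInstance

theorem statement13_general (A : Type) [CommGroup A]
    (k : Type) [Field k] (c : Zhalf →+* k)
    (p : MonoidAlgebra Zhalf A) (hp : p * p = p) (hp0 : p ≠ 0) :
    (MonoidAlgebra.ofCoeff (Finsupp.mapRange ⇑c (map_zero c) p.coeff) : MonoidAlgebra k A) ≠ 0 :=
  MonoidAlgebra.mapRingHom_ne_zero_of_isIdempotentElem c hp hp0

/-- for an abelian group `A` of exponent dividing 2 and a field `k` with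
`char k ≠ 2`, the coefficient-reduction `ρ : ℤ[1/2][A] → k[A]` (induced by the canonical —
hence arbitrary — ring homomorphism `c : ℤ[1/2] → k`) sends nonzero idempotents to nonzero
elements. -/
theorem statement13 (A : Type) [CommGroup A] (hA : ∀ a : A, a ^ 2 = 1)
    (k : Type) [Field k] (hchar : ringChar k ≠ 2) (c : Zhalf →+* k)
    (p : MonoidAlgebra Zhalf A) (hp : p * p = p) (hp0 : p ≠ 0) :
    (MonoidAlgebra.ofCoeff (Finsupp.mapRange ⇑c (map_zero c) p.coeff) : MonoidAlgebra k A) ≠ 0 :=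
  statement13_general A k c p hp hp0
end

section
/- Let F be a finite abelian group in which every element has order dividing 2, let p ∈ ℤ[1/2][F] satisfy p² = p, let k be a field with char(k) ≠ 2, and let ρ(p) ∈ k[F] be the image of p under the map induced by the canonical ring homomorphism ℤ[1/2] → k. Then the dimension over k of the k-linear span of {ρ(p)·a : a ∈ F} inside k[F] equals the number of group homomorphisms χ : F → {1,−1} with Σ_{a∈F} p_a·χ(a) = 1, where p = Σ_{a∈F} p_a·a. -/
/-- coefficient reduction of group-ring elements along `c : ℤ[1/2] →+* k` -/
noncomputable def mapCoeffs {k : Type*} [Field k] {A : Type*} (c : Zhalf →+* k)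
    (p : MonoidAlgebra Zhalf A) : MonoidAlgebra k A :=
  MonoidAlgebra.ofCoeff (Finsupp.mapRange ⇑c (map_zero c) p.coeff)

open Module Submodule

theorem LinearMap.finrank_range_eq_card_of_apply_eq_smul {K V ι : Type*} [Field K]
    [AddCommGroup V] [Module K V] [Finite ι] (B : Basis ι K V) (f : V →ₗ[K] V) (μ : ι → K)
    (hf : ∀ i, f (B i) = μ i • B i) :
    finrank K (LinearMap.range f) = Nat.card {i // μ i ≠ 0} := by
  classical
  cases nonempty_fintype ι
  have hdiag : LinearMap.toMatrix B B f = Matrix.diagonal μ := by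
    ext i j
    rw [LinearMap.toMatrix_apply, hf, map_smul, B.repr_self, Finsupp.smul_apply,
      Finsupp.single_apply, Matrix.diagonal_apply, smul_eq_mul]
    split_ifs <;> simp_all [eq_comm]
  rw [← Matrix.toLin_toMatrix B B f, ← Matrix.rank_eq_finrank_range_toLin, hdiag,
    Matrix.rank_diagonal, Nat.card_eq_fintype_card]

theorem RingHom.injOn_one_neg_one {R K : Type*} [Ring R] [Ring K] (c : R →+* K)
    (hK : (-1 : K) ≠ 1) : Set.InjOn c {1, -1} := by
  rintro x (rfl | rfl) y (rfl | rfl) h <;> simp_all [eq_comm]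

namespace MonoidAlgebra

section Monoid

variable {k M : Type*} [CommSemiring k] [Monoid M]

theorem span_range_mul_single_eq_range_mulLeft (q : MonoidAlgebra k M) :
    span k (Set.range fun a : M => q * single a (1 : k)) =
      LinearMap.range (LinearMap.mulLeft k q) := by
  rw [LinearMap.range_eq_map, ← (MonoidAlgebra.basis M k).span_eq, Submodule.map_span,
    ← Set.range_comp]
  rfl

theorem lift_comp_mapRingHom {K : Type*} [CommSemiring K] (c : k →+* K) (ψ : M →* k)
    (p : MonoidAlgebra k M) :
    lift K K M ((c : k →* K).comp ψ) (mapRingHom M c p) = c (lift k k M ψ p) := by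
  induction p using MonoidAlgebra.induction_linear with
  | zero => simp
  | add x y hx hy => simp only [map_add, hx, hy]
  | single a r => simp [mapRingHom_single]

end Monoid

section CommGroup

variable {k F : Type*} [Field k] [CommGroup F] [Fintype F]

noncomputable def charVector (χ : F →* k) : MonoidAlgebra k F :=
  ofCoeff (Finsupp.equivFunOnFinite.symm fun a => χ a⁻¹)

@[simp]
theorem coeff_charVector (χ : F →* k) (a : F) : (charVector χ).coeff a = χ a⁻¹ := rfl

theorem single_mul_charVector (χ : F →* k) (b : F) (r : k) :
    single b r * charVector χ = (r * χ b) • charVector χ := by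
  ext a
  simp only [coeff_single_mul_apply, coeff_charVector, coeff_smul, Finsupp.smul_apply,
    smul_eq_mul, mul_inv_rev, inv_inv, map_mul]
  ring

theorem mul_charVector (χ : F →* k) (q : MonoidAlgebra k F) :
    q * charVector χ = lift k k F χ q • charVector χ := by
  induction q using MonoidAlgebra.induction_linear with
  | zero => simp
  | add x y hx hy => rw [add_mul, hx, hy, map_add, add_smul]
  | single b r => rw [single_mul_charVector, lift_single, smul_eq_mul]

theorem linearIndependent_charVector :
    LinearIndependent k (charVector : (F →* k) → MonoidAlgebra k F) := by
  let coeffsAtInv : MonoidAlgebra k F →ₗ[k] F → k :=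
    LinearMap.funLeft k k (fun a : F => a⁻¹) ∘ₗ Finsupp.lcoeFun ∘ₗ
      (coeffLinearEquiv k).toLinearMap
  have h : coeffsAtInv ∘ charVector = fun χ : F →* k => ⇑χ := by
    ext χ a
    simp [coeffsAtInv, coeffLinearEquiv]
  exact .of_comp coeffsAtInv (h ▸ linearIndependent_monoidHom F k)

theorem finrank_span_mul_single_eq_card {ι : Type*} (χ : ι → F →* k)
    (hχ : Function.Injective χ) (hcard : Nat.card ι = Nat.card F) (q : MonoidAlgebra k F) :
    finrank k (span k (Set.range fun a : F => q * single a (1 : k))) =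
      Nat.card {i // lift k k F (χ i) q ≠ 0} := by
  have hpos : 0 < Nat.card ι := hcard ▸ Nat.card_pos
  have : Finite ι := Nat.finite_of_card_ne_zero hpos.ne'
  have : Nonempty ι := (Nat.card_pos_iff.1 hpos).1
  cases nonempty_fintype ι
  let B := basisOfLinearIndependentOfCardEqFinrank (linearIndependent_charVector.comp χ hχ)
    (by rw [finrank_eq_card_basis (MonoidAlgebra.basis F k), ← Nat.card_eq_fintype_card, hcard,
      Nat.card_eq_fintype_card])
  rw [span_range_mul_single_eq_range_mulLeft]
  exact LinearMap.finrank_range_eq_card_of_apply_eq_smul B _ _ fun i => by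
    simp [B, mul_charVector]

end CommGroup

end MonoidAlgebra

section SignCharacters

variable {G : Type*} [CommGroup G]

def MonoidHom.toHomUnitsEquiv (M : Type*) [Monoid M] : (G →* M) ≃ (G →* Mˣ) where
  toFun χ := χ.toHomUnits
  invFun ψ := (Units.coeHom M).comp ψ
  left_inv _ := rfl
  right_inv _ := by ext; rfl

theorem card_monoidHom_units_of_sq_eq_one [Finite G] (K : Type*) [CommRing K] [IsDomain K]
    (hK : ringChar K ≠ 2) (hG : ∀ a : G, a ^ 2 = 1) :
    Nat.card (G →* Kˣ) = Nat.card G := by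
  have : HasEnoughRootsOfUnity K 2 :=
    ⟨⟨-1, IsPrimitiveRoot.neg_one (ringChar K) hK⟩, rootsOfUnity.isCyclic K 2⟩
  have := HasEnoughRootsOfUnity.of_dvd K (Monoid.exponent_dvd_of_forall_pow_eq_one hG)
  exact CommGroup.card_monoidHom_of_hasEnoughRootsOfUnity G K

theorem card_signValued_monoidHom_of_sq_eq_one [Finite G] (K : Type*) [CommRing K] [IsDomain K]
    (hK : ringChar K ≠ 2) (hG : ∀ a : G, a ^ 2 = 1) :
    Nat.card {χ : G →* K // ∀ a, χ a = 1 ∨ χ a = -1} = Nat.card G := by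
  have hsign (χ : G →* K) (a : G) : χ a = 1 ∨ χ a = -1 := by
    rw [← sq_eq_one_iff, ← map_pow, hG, map_one]
  rw [Nat.card_congr (Equiv.subtypeUnivEquiv fun χ => hsign χ),
    Nat.card_congr (MonoidHom.toHomUnitsEquiv K), card_monoidHom_units_of_sq_eq_one K hK hG]

variable {R : Type*} [CommRing R]

def MonoidHom.signCodRestrict (S : Subring R) (χ : G →* R) (hχ : ∀ a, χ a = 1 ∨ χ a = -1) :
    G →* S :=
  χ.codRestrict S fun a => by
    rcases hχ a with h | h <;> rw [h]
    exacts [one_mem S, neg_mem (one_mem S)]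

theorem MonoidHom.signCodRestrict_apply_eq_one_or (S : Subring R) (χ : G →* R)
    (hχ : ∀ a, χ a = 1 ∨ χ a = -1) (a : G) :
    χ.signCodRestrict S hχ a = 1 ∨ χ.signCodRestrict S hχ a = -1 := by
  simpa [Subtype.ext_iff, MonoidHom.signCodRestrict] using hχ a

theorem MonoidAlgebra.coe_lift_signCodRestrict [Fintype G] (S : Subring R) (χ : G →* R)
    (hχ : ∀ a, χ a = 1 ∨ χ a = -1) (p : MonoidAlgebra S G) :
    (MonoidAlgebra.lift S S G (χ.signCodRestrict S hχ) p : R) = ∑ a, (p.coeff a : R) * χ a := by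
  rw [MonoidAlgebra.lift_apply, Finsupp.sum_fintype _ _ fun _ => by simp]
  push_cast
  rfl

theorem injective_comp_signCodRestrict {K : Type*} [Ring K] (S : Subring R) (c : S →+* K)
    (hK : (-1 : K) ≠ 1) :
    Function.Injective fun χ : {χ : G →* R // ∀ a, χ a = 1 ∨ χ a = -1} =>
      (c : S →* K).comp (χ.1.signCodRestrict S χ.2) := by
  intro χ ψ h
  ext a
  exact congrArg Subtype.val <| c.injOn_one_neg_one hK
    (χ.1.signCodRestrict_apply_eq_one_or S χ.2 a) (ψ.1.signCodRestrict_apply_eq_one_or S ψ.2 a)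
    (DFunLike.congr_fun h a)

end SignCharacters

theorem mapCoeffs_eq_mapRingHom {k A : Type*} [Field k] [Monoid A] (c : Zhalf →+* k)
    (p : MonoidAlgebra Zhalf A) : mapCoeffs c p = MonoidAlgebra.mapRingHom A c p := by
  ext a
  simp [mapCoeffs]

/-- STATEMENT 14: for a finite abelian group `F` of exponent dividing 2, an idempotent
`p ∈ ℤ[1/2][F]` and a field `k` with `char k ≠ 2`, the `k`-dimension of the span of
`{ρ(p)·a : a ∈ F}` in `k[F]` equals the number of homomorphisms `χ : F → {1,−1}` with
`Σ_{a∈F} p_a·χ(a) = 1`. -/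
theorem statement14 (F : Type) [CommGroup F] [Fintype F] (hF : ∀ a : F, a ^ 2 = 1)
    (p : MonoidAlgebra Zhalf F) (hp : p * p = p)
    (k : Type) [Field k] (hchar : ringChar k ≠ 2) (c : Zhalf →+* k) :
    Module.finrank k
        (Submodule.span k (Set.range fun a : F =>
          mapCoeffs c p * MonoidAlgebra.single a (1 : k))) =
      Nat.card {χ : F →* ℚ //
        (∀ a : F, χ a = 1 ∨ χ a = -1) ∧ ∑ a : F, ((p.coeff a : ℚ) * χ a) = 1} := by
  have hℚ : ringChar ℚ ≠ 2 := by rw [ringChar.eq_zero]; norm_num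
  rw [MonoidAlgebra.finrank_span_mul_single_eq_card _
    (injective_comp_signCodRestrict Zhalf c (Ring.neg_one_ne_one_of_char_ne_two hchar))
    (card_signValued_monoidHom_of_sq_eq_one ℚ hℚ hF), mapCoeffs_eq_mapRingHom]
  refine Nat.card_congr ((Equiv.subtypeEquivRight fun χ => ?_).trans
    (Equiv.subtypeSubtypeEquivSubtypeInter _ _))
  rw [MonoidAlgebra.lift_comp_mapRingHom, ← MonoidAlgebra.coe_lift_signCodRestrict Zhalf χ.1 χ.2]
  have hidem :
      IsIdempotentElem (MonoidAlgebra.lift Zhalf Zhalf F (χ.1.signCodRestrict Zhalf χ.2) p) := by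
    rw [IsIdempotentElem, ← map_mul, hp]
  rcases IsIdempotentElem.iff_eq_zero_or_one.1 hidem with h | h <;> simp [h]
end

section
/- Let k be a field, let G be a loop-tree graph of type (a,b) with a ≥ 1, with vertex set V and root r, let M_α : k[V] → k[V] be the adjacency operator of G over k (sending a vertex v to the sum of the endpoints of the edges leaving v, each with coefficient 1), and let M_β : k[V] → k[V] be the zero map if b = 0, and the map sending Σ_{v∈V} c_v·v to c_r·r if b = 1. Then dim_k(ker M_α ∩ ker M_β) = a − b. -/
set_option linter.unusedSectionVars false

namespace St16

variable {V : Type} [Fintype V] [DecidableEq V]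
variable {root : V} {parent : V → V}

/-- depth of a vertex -/
noncomputable def dep (htree : ∀ v : V, ∃ m : ℕ, parent^[m] v = root) (v : V) : ℕ :=
  Nat.find (htree v)

variable (hroot : parent root = root) (htree : ∀ v : V, ∃ m : ℕ, parent^[m] v = root)

include hroot htree

theorem dep_spec (v : V) : parent^[dep htree v] v = root := Nat.find_spec (htree v)

theorem iter_root (m : ℕ) : parent^[m] root = root := Function.iterate_fixed hroot m

theorem dep_le_iff {v : V} {m : ℕ} : dep htree v ≤ m ↔ parent^[m] v = root := by
  constructor
  · intro h
    have hs := dep_spec hroot htree v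
    calc parent^[m] v = parent^[m - dep htree v] (parent^[dep htree v] v) := by
          rw [← Function.iterate_add_apply]; congr 1; omega
    _ = root := by rw [hs]; exact iter_root hroot htree _
  · intro h; exact Nat.find_le h

theorem dep_root : dep htree root = 0 :=
  Nat.le_zero.mp ((dep_le_iff hroot htree).mpr rfl)

theorem dep_pos {v : V} (hv : v ≠ root) : 1 ≤ dep htree v := by
  by_contra h
  have h0 : dep htree v = 0 := by omega
  have := dep_spec hroot htree v
  rw [h0] at this
  exact hv this

theorem dep_parent {v : V} (hv : v ≠ root) : dep htree v = dep htree (parent v) + 1 := by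
  have h1 : dep htree (parent v) ≤ dep htree v - 1 := by
    rw [dep_le_iff hroot htree]
    have hs := dep_spec hroot htree v
    have := dep_pos hroot htree hv
    calc parent^[dep htree v - 1] (parent v) = parent^[dep htree v] v := by
          rw [← Function.iterate_succ_apply]; congr 1; omega
    _ = root := hs
  have h2 : dep htree v ≤ dep htree (parent v) + 1 := by
    rw [dep_le_iff hroot htree, Function.iterate_succ_apply]
    exact dep_spec hroot htree (parent v)
  have := dep_pos hroot htree hv
  omega

theorem dep_iter : ∀ (m : ℕ) (v : V), m ≤ dep htree v →
    dep htree (parent^[m] v) = dep htree v - m := by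
  intro m
  induction m with
  | zero => intro v _; simp
  | succ n ih =>
    intro v hm
    have hv : v ≠ root := by
      intro h; subst h; rw [dep_root hroot htree] at hm; omega
    have hp := dep_parent hroot htree hv
    rw [Function.iterate_succ_apply]
    rw [ih (parent v) (by omega)]
    omega


section Sets

variable (root parent) in
/-- the set of children of a vertex -/
def childset (w : V) : Finset V := Finset.univ.filter (fun c => c ≠ root ∧ parent c = w)

variable (p : V → Prop) [DecidablePred p]

variable (root) in
/-- the `p`-vertices in the subtree of `v` -/
noncomputable def Aset (v : V) : Finset V :=
  Finset.univ.filter (fun ℓ => p ℓ ∧ dep htree v ≤ dep htree ℓ ∧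
    parent^[dep htree ℓ - dep htree v] ℓ = v)

omit hroot in
theorem mem_Aset {ℓ v : V} : ℓ ∈ Aset root htree p v ↔
    p ℓ ∧ dep htree v ≤ dep htree ℓ ∧ parent^[dep htree ℓ - dep htree v] ℓ = v := by
  simp [Aset]

theorem dep_child {c w : V} (h : c ∈ childset root parent w) :
    dep htree c = dep htree w + 1 := by
  rw [childset, Finset.mem_filter] at h
  rw [dep_parent hroot htree h.2.1, h.2.2]

theorem A_child_sub {c w : V} (hc : c ∈ childset root parent w) :
    Aset root htree p c ⊆ (Aset root htree p w).erase w := by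
  intro ℓ hℓ
  rw [mem_Aset] at hℓ
  obtain ⟨hpℓ, hle, hit⟩ := hℓ
  have hdc := dep_child hroot htree hc
  have hpc : parent c = w := by
    rw [childset, Finset.mem_filter] at hc; exact hc.2.2
  rw [Finset.mem_erase, mem_Aset]
  constructor
  · intro h; subst h
    omega
  · refine ⟨hpℓ, by omega, ?_⟩
    have h1 : dep htree ℓ - dep htree w = (dep htree ℓ - dep htree c) + 1 := by omega
    rw [h1, Function.iterate_succ_apply', hit, hpc]

theorem A_erase_mem {ℓ w : V} (h : ℓ ∈ (Aset root htree p w).erase w) :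
    ∃ c ∈ childset root parent w, ℓ ∈ Aset root htree p c := by
  rw [Finset.mem_erase, mem_Aset] at h
  obtain ⟨hne, hpℓ, hle, hit⟩ := h
  have hlt : dep htree w < dep htree ℓ := by
    rcases Nat.lt_or_ge (dep htree w) (dep htree ℓ) with h | h
    · exact h
    · exfalso
      have : dep htree ℓ - dep htree w = 0 := by omega
      rw [this] at hit
      simp only [Function.iterate_zero_apply] at hit
      exact hne hit
  set m : ℕ := dep htree ℓ - dep htree w - 1 with hm
  set c : V := parent^[m] ℓ with hcdef
  have hdc : dep htree c = dep htree w + 1 := by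
    rw [hcdef, dep_iter hroot htree m ℓ (by omega)]; omega
  have hcroot : c ≠ root := by
    intro h
    rw [h, dep_root hroot htree] at hdc
    omega
  have hpc : parent c = w := by
    rw [hcdef, ← Function.iterate_succ_apply' parent m ℓ]
    have h2 : m.succ = dep htree ℓ - dep htree w := by omega
    rw [h2, hit]
  refine ⟨c, ?_, ?_⟩
  · rw [childset, Finset.mem_filter]
    exact ⟨Finset.mem_univ _, hcroot, hpc⟩
  · rw [mem_Aset]
    refine ⟨hpℓ, by omega, ?_⟩
    have : dep htree ℓ - dep htree c = m := by omega
    rw [this]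

theorem A_pairwise (w : V) :
    Set.PairwiseDisjoint (childset root parent w : Set V) (Aset root htree p) := by
  intro c hc c' hc' hne
  rw [Finset.mem_coe] at hc hc'
  rw [Function.onFun, Finset.disjoint_left]
  intro ℓ h1 h2
  rw [mem_Aset] at h1 h2
  have d1 := dep_child hroot htree hc
  have d2 := dep_child hroot htree hc'
  apply hne
  have e1 := h1.2.2
  have e2 := h2.2.2
  rw [d1] at e1
  rw [d2] at e2
  rw [← e1, ← e2]

end Sets


end St16

namespace St16

/-- the canonical solution value at `v` determined by leaf values `g` -/
noncomputable def Fop (k : Type) [Field k] {V : Type} [Fintype V] [DecidableEq V]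
    (root : V) {parent : V → V} (htree : ∀ v : V, ∃ m : ℕ, parent^[m] v = root)
    (p : V → Prop) [DecidablePred p] (g : V → k) (v : V) : k :=
  ∑ ℓ ∈ Aset root htree p v, (-1 : k) ^ (dep htree ℓ - dep htree v) * g ℓ

theorem sum_child_Fop (k : Type) [Field k] {V : Type} [Fintype V] [DecidableEq V]
    {root : V} {parent : V → V} (hroot : parent root = root)
    (htree : ∀ v : V, ∃ m : ℕ, parent^[m] v = root)
    (p : V → Prop) [DecidablePred p] (g : V → k) (w : V) :
    ∑ c ∈ childset root parent w, Fop k root htree p g c =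
      (if p w then g w else 0) - Fop k root htree p g w := by
  have hbi : (childset root parent w).biUnion (Aset root htree p) =
      (Aset root htree p w).erase w := by
    ext ℓ
    simp only [Finset.mem_biUnion]
    constructor
    · rintro ⟨c, hc, hℓ⟩
      exact A_child_sub hroot htree p hc hℓ
    · intro h
      exact A_erase_mem hroot htree p h
  have key : ∑ c ∈ childset root parent w, Fop k root htree p g c =
      ∑ c ∈ childset root parent w, ∑ ℓ ∈ Aset root htree p c,
        -((-1 : k) ^ (dep htree ℓ - dep htree w) * g ℓ) := by
    apply Finset.sum_congr rfl
    intro c hc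
    apply Finset.sum_congr rfl
    intro ℓ hℓ
    have hdc := dep_child hroot htree hc
    rw [mem_Aset] at hℓ
    have hle := hℓ.2.1
    have h1 : dep htree ℓ - dep htree w = (dep htree ℓ - dep htree c) + 1 := by omega
    rw [h1, pow_succ]
    ring
  rw [key, ← Finset.sum_biUnion (A_pairwise hroot htree p w), hbi, Finset.sum_neg_distrib]
  by_cases hpw : p w
  · have hw : w ∈ Aset root htree p w := by
      rw [mem_Aset]
      exact ⟨hpw, le_refl _, by simp⟩
    rw [Finset.sum_erase_eq_sub hw, Nat.sub_self, pow_zero, one_mul, if_pos hpw]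
    rw [show Fop k root htree p g w = ∑ ℓ ∈ Aset root htree p w,
      (-1 : k) ^ (dep htree ℓ - dep htree w) * g ℓ from rfl]
    rw [neg_sub]
  · have hw : w ∉ Aset root htree p w := by
      rw [mem_Aset]
      tauto
    rw [Finset.erase_eq_of_notMem hw, if_neg hpw]
    rw [show Fop k root htree p g w = ∑ ℓ ∈ Aset root htree p w,
      (-1 : k) ^ (dep htree ℓ - dep htree w) * g ℓ from rfl]
    rw [zero_sub]


theorem Fop_def (k : Type) [Field k] {V : Type} [Fintype V] [DecidableEq V]
    (root : V) {parent : V → V} (htree : ∀ v : V, ∃ m : ℕ, parent^[m] v = root)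
    (p : V → Prop) [DecidablePred p] (g : V → k) (v : V) :
    Fop k root htree p g v =
      ∑ ℓ ∈ Aset root htree p v, (-1 : k) ^ (dep htree ℓ - dep htree v) * g ℓ := rfl

theorem sum_proj_apply {k : Type} [Field k] {L : Type} [Fintype L] [DecidableEq L]
    (coeff : L → k) (g : L → k) :
    (∑ ℓ : L, coeff ℓ • (LinearMap.proj ℓ : (L → k) →ₗ[k] k)) g = ∑ ℓ : L, coeff ℓ * g ℓ := by
  simp [LinearMap.sum_apply, LinearMap.smul_apply, LinearMap.proj_apply, smul_eq_mul]

theorem sum_proj_surj {k : Type} [Field k] {L : Type} [Fintype L] [DecidableEq L]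
    (coeff : L → k) (ℓ₀ : L) (h : coeff ℓ₀ ≠ 0) :
    Function.Surjective (∑ ℓ : L, coeff ℓ • (LinearMap.proj ℓ : (L → k) →ₗ[k] k)) := by
  intro x
  refine ⟨Pi.single ℓ₀ (x / coeff ℓ₀), ?_⟩
  simp only [LinearMap.coe_sum, Finset.sum_apply, LinearMap.smul_apply,
    LinearMap.proj_apply, smul_eq_mul]
  rw [Finset.sum_eq_single ℓ₀]
  · rw [Pi.single_eq_same]; field_simp
  · intro ℓ _ hne; rw [Pi.single_eq_of_ne hne, mul_zero]
  · intro hmem; exact absurd (Finset.mem_univ _) hmem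

theorem finrank_of_equiv_ker {k : Type} [Field k] {S T U : Type}
    [AddCommGroup S] [Module k S] [AddCommGroup T] [Module k T] [AddCommGroup U] [Module k U]
    [FiniteDimensional k T]
    (e : S →ₗ[k] T) (Φ : T →ₗ[k] U) (hinj : Function.Injective e)
    (hrange : LinearMap.range e = LinearMap.ker Φ) (hsurj : Function.Surjective Φ) :
    Module.finrank k S + Module.finrank k U = Module.finrank k T := by
  have h1 := LinearMap.finrank_range_of_inj hinj
  have h2 := LinearMap.finrank_range_add_finrank_ker Φ
  rw [LinearMap.range_eq_top.mpr hsurj, finrank_top] at h2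
  rw [← h1, hrange]
  omega

end St16

open St16

/-- STATEMENT 16: Let `G` be a loop-tree graph of type `(a,b)` with `a ≥ 1`: a finite
rooted tree (given by `root` and a `parent` function, all tree edges oriented towards the
root) with self-loops at the vertices in `loop`, such that every internal vertex has a
self-loop, the root has a self-loop iff `b = 1`, and exactly `a` of the leaves have no
self-loop.  Let `Mα` be the adjacency operator of `G` over `k` and `Mβ` the operator which
is zero if `b = 0` and sends `Σ c_v·v` to `c_root·root` if `b = 1`.  Then
`dim_k (ker Mα ∩ ker Mβ) = a − b`. -/
theorem statement16 (k : Type) [Field k] (V : Type) [Fintype V] [DecidableEq V]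
    (root : V) (parent : V → V) (loop : V → Prop) [DecidablePred loop]
    (a b : ℕ) (ha : 1 ≤ a) (hb : b ≤ 1)
    (hroot : parent root = root)
    (htree : ∀ v : V, ∃ m : ℕ, parent^[m] v = root)
    (hinternal : ∀ v : V, v ≠ root → (∃ w : V, w ≠ root ∧ parent w = v) → loop v)
    (hrootloop : loop root ↔ b = 1)
    (hleaves : ((Finset.univ : Finset V).filter fun v =>
      (¬∃ w : V, w ≠ root ∧ parent w = v) ∧ ¬loop v).card = a)
    (Mα Mβ : (V → k) →ₗ[k] (V → k))
    (hMα : ∀ (f : V → k) (w : V), Mα f w =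
      ∑ v : V, f v * ((if v ≠ root ∧ w = parent v then (1 : k) else 0) +
        (if loop v ∧ w = v then (1 : k) else 0)))
    (hMβ : ∀ (f : V → k) (w : V), Mβ f w = if b = 1 ∧ w = root then f root else 0) :
    Module.finrank k ↥(LinearMap.ker Mα ⊓ LinearMap.ker Mβ) = a - b := by
  by_cases hsing : ∀ v : V, v = root
  · -- trivial case : V = {root}
    have hnl : ¬ loop root := by
      intro hl
      have hcard : ((Finset.univ : Finset V).filter fun v =>
          (¬∃ w : V, w ≠ root ∧ parent w = v) ∧ ¬loop v).card = 0 := by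
        rw [Finset.card_eq_zero, Finset.eq_empty_iff_forall_notMem]
        intro v hv
        rw [Finset.mem_filter] at hv
        exact hv.2.2 (by rw [hsing v]; exact hl)
      omega
    have hb0 : b = 0 := by
      rcases Nat.le_one_iff_eq_zero_or_eq_one.mp hb with h | h
      · exact h
      · exact absurd (hrootloop.mpr h) hnl
    have ha1 : a = 1 := by
      rw [← hleaves]
      have hfil : ((Finset.univ : Finset V).filter fun v =>
          (¬∃ w : V, w ≠ root ∧ parent w = v) ∧ ¬loop v) = Finset.univ := by
        rw [Finset.filter_eq_self]
        intro v _
        constructor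
        · rintro ⟨w, hw, -⟩; exact hw (hsing w)
        · rw [hsing v]; exact hnl
      rw [hfil, Finset.card_univ]
      exact Fintype.card_eq_one_iff.mpr ⟨root, fun v => hsing v⟩
    have hker : LinearMap.ker Mα ⊓ LinearMap.ker Mβ = ⊤ := by
      rw [eq_top_iff]
      rintro f -
      rw [Submodule.mem_inf]
      constructor
      · rw [LinearMap.mem_ker]
        funext w
        rw [hMα]
        apply Finset.sum_eq_zero
        intro v _
        have hv : v = root := hsing v
        have hnlv : ¬ loop v := by rw [hv]; exact hnl
        simp [hv, hnl]
      · rw [LinearMap.mem_ker]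
        funext w
        rw [hMβ, hb0]
        simp
    rw [hker, hb0, ha1, finrank_top, Module.finrank_pi,
      Fintype.card_eq_one_iff.mpr ⟨root, fun v => hsing v⟩]
  · -- main case
    push_neg at hsing
    obtain ⟨v₀, hv₀⟩ := hsing
    have hchild : ∃ c : V, c ≠ root ∧ parent c = root := by
      have hd0 := dep_pos hroot htree hv₀
      refine ⟨parent^[dep htree v₀ - 1] v₀, ?_, ?_⟩
      · intro h
        have hdi := dep_iter hroot htree (dep htree v₀ - 1) v₀ (by omega)
        rw [h, dep_root hroot htree] at hdi
        omega
      · rw [← Function.iterate_succ_apply' parent _ v₀]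
        have h2 : (dep htree v₀ - 1).succ = dep htree v₀ := by omega
        rw [h2]
        exact dep_spec hroot htree v₀
    -- the leaf predicate
    set p : V → Prop := fun v => (¬∃ w : V, w ≠ root ∧ parent w = v) ∧ ¬loop v with hpdef
    letI hdp : DecidablePred p := fun v => instDecidableAnd
    have hproot : ¬ p root := fun h => h.1 hchild
    have hMα' : ∀ (f : V → k) (w : V), Mα f w =
        (∑ c ∈ childset root parent w, f c) + (if loop w then f w else 0) := by
      intro f w
      rw [hMα]
      have hsplit : ∀ v : V, f v * ((if v ≠ root ∧ w = parent v then (1:k) else 0) +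
          (if loop v ∧ w = v then (1:k) else 0)) =
          (if v ≠ root ∧ parent v = w then f v else 0) +
          (if w = v then (if loop v then f v else 0) else 0) := by
        intro v
        rw [mul_add]
        congr 1
        · by_cases h : v ≠ root ∧ w = parent v
          · rw [if_pos h, mul_one, if_pos ⟨h.1, h.2.symm⟩]
          · rw [if_neg h, mul_zero, if_neg (fun hc => h ⟨hc.1, hc.2.symm⟩)]
        · by_cases h : loop v ∧ w = v
          · rw [if_pos h, mul_one, if_pos h.2, if_pos h.1]
          · rw [if_neg h, mul_zero]
            by_cases h4 : w = v
            · by_cases h2 : loop v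
              · exact absurd ⟨h2, h4⟩ h
              · rw [if_pos h4, if_neg h2]
            · rw [if_neg h4]
      rw [Finset.sum_congr rfl fun v _ => hsplit v, Finset.sum_add_distrib]
      congr 1
      · rw [childset, Finset.sum_filter]
      · rw [Finset.sum_ite_eq]
        simp
    have hkerMα : ∀ f : V → k, Mα f = 0 ↔ ∀ w : V,
        (∑ c ∈ childset root parent w, f c) + (if loop w then f w else 0) = 0 := by
      intro f
      constructor
      · intro h w; rw [← hMα' f w, h]; rfl
      · intro h; funext w; rw [hMα' f w]; exact h w
    -- leaves have empty child set and Fop is the identity there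
    have hleafcs : ∀ w : V, p w → childset root parent w = ∅ := by
      intro w hw
      rw [Finset.eq_empty_iff_forall_notMem]
      intro c hc
      rw [childset, Finset.mem_filter] at hc
      exact hw.1 ⟨c, hc.2.1, hc.2.2⟩
    have hFopleaf : ∀ (g : V → k) (w : V), p w → Fop k root htree p g w = g w := by
      intro g w hw
      have hpart := sum_child_Fop k hroot htree p g w
      rw [hleafcs w hw, Finset.sum_empty, if_pos hw] at hpart
      linear_combination hpart
    -- the key induction: values are determined by leaf values
    have hkey : ∀ f : V → k, Mα f = 0 → ∀ v : V, v ≠ root →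
        f v = Fop k root htree p f v := by
      intro f hf
      have hf' := (hkerMα f).mp hf
      have hfin : ∀ v : V, v ≠ root →
          ((if p v then f v else 0) - Fop k root htree p f v) + (if loop v then f v else 0) = 0 →
          f v = Fop k root htree p f v := by
        intro v hv heq
        by_cases hl : loop v
        · have hpv : ¬ p v := fun h => h.2 hl
          rw [if_neg hpv, if_pos hl] at heq
          linear_combination heq
        · have hpv : p v := ⟨fun ⟨w1, hw1, hw2⟩ => hl (hinternal v hv ⟨w1, hw1, hw2⟩), hl⟩
          rw [if_pos hpv, if_neg hl] at heq
          linear_combination heq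
      obtain ⟨N, hN⟩ : ∃ N : ℕ, ∀ v : V, dep htree v ≤ N :=
        ⟨Finset.univ.sup (dep htree), fun v => Finset.le_sup (Finset.mem_univ v)⟩
      suffices h : ∀ (n : ℕ) (v : V), v ≠ root → N - dep htree v ≤ n →
          f v = Fop k root htree p f v by
        intro v hv
        exact h N v hv (by omega)
      intro n
      induction n with
      | zero =>
        intro v hv hn
        have hcs : childset root parent v = ∅ := by
          rw [Finset.eq_empty_iff_forall_notMem]
          intro c hc
          have h1 := dep_child hroot htree hc
          have h2 := hN c
          have h3 := hN v
          omega
        have hsum : ∑ c ∈ childset root parent v, f c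
            = ∑ c ∈ childset root parent v, Fop k root htree p f c := by
          rw [hcs]
          simp
        have heq := hf' v
        have hpart := sum_child_Fop k hroot htree p f v
        rw [hsum, hpart] at heq
        exact hfin v hv heq
      | succ n ih =>
        intro v hv hn
        have hsum : ∑ c ∈ childset root parent v, f c
            = ∑ c ∈ childset root parent v, Fop k root htree p f c := by
          apply Finset.sum_congr rfl
          intro c hc
          have h1 := dep_child hroot htree hc
          have hcroot : c ≠ root := by
            rw [childset, Finset.mem_filter] at hc
            exact hc.2.1
          have h2 := hN c
          exact ih c hcroot (by omega)
        have heq := hf' v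
        have hpart := sum_child_Fop k hroot htree p f v
        rw [hsum, hpart] at heq
        exact hfin v hv heq
    -- the root equation
    have hrooteq : ∀ f : V → k, Mα f = 0 →
        Fop k root htree p f root = (if loop root then f root else 0) := by
      intro f hf
      have heq := (hkerMα f).mp hf root
      have hsum : ∑ c ∈ childset root parent root, f c
          = ∑ c ∈ childset root parent root, Fop k root htree p f c := by
        apply Finset.sum_congr rfl
        intro c hc
        have hcroot : c ≠ root := by
          rw [childset, Finset.mem_filter] at hc
          exact hc.2.1
        exact hkey f hf c hcroot
      have hpart := sum_child_Fop k hroot htree p f root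
      rw [hsum, hpart, if_neg hproot, zero_sub] at heq
      linear_combination -heq
    -- linear algebra part
    have hcardL : Fintype.card {v : V // p v} = a := by
      rw [Fintype.card_of_subtype (Finset.univ.filter
        (fun v => (¬∃ w : V, w ≠ root ∧ parent w = v) ∧ ¬loop v))
        (by intro x; simp [hpdef])]
      exact hleaves
    have hLne : Nonempty {v : V // p v} := by
      rw [← Fintype.card_pos_iff, hcardL]
      omega
    obtain ⟨ℓ₀⟩ := hLne
    set φL : ({v : V // p v} → k) →ₗ[k] k :=
      ∑ ℓ : {v : V // p v}, ((-1 : k) ^ (dep htree ℓ.1)) • LinearMap.proj ℓ with hφLdef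
    have hφLapp : ∀ g : {v : V // p v} → k,
        φL g = ∑ ℓ : {v : V // p v}, (-1:k) ^ (dep htree ℓ.1) * g ℓ := by
      intro g
      rw [hφLdef]
      exact sum_proj_apply _ g
    have hφLsurj : Function.Surjective φL := by
      rw [hφLdef]
      have hs := sum_proj_surj (fun ℓ : {v : V // p v} => (-1:k) ^ (dep htree ℓ.1)) ℓ₀
        (pow_ne_zero _ (neg_ne_zero.mpr one_ne_zero))
      rwa [← LinearMap.coe_sum] at hs
    have hAroot : Aset root htree p root = Finset.univ.filter p := by
      ext ℓ
      rw [mem_Aset, Finset.mem_filter]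
      constructor
      · rintro ⟨hh1, -, -⟩
        exact ⟨Finset.mem_univ _, hh1⟩
      · rintro ⟨-, hh1⟩
        refine ⟨hh1, by rw [dep_root hroot htree]; omega, ?_⟩
        rw [dep_root hroot htree, Nat.sub_zero]
        exact dep_spec hroot htree ℓ
    have hFoproot : ∀ f : V → k, Fop k root htree p f root = φL (fun ℓ => f ℓ.1) := by
      intro f
      rw [hφLapp, Fop_def, hAroot]
      have hcg : ∀ ℓ ∈ Finset.univ.filter p,
          (-1:k)^(dep htree ℓ - dep htree root) * f ℓ = (-1:k)^(dep htree ℓ) * f ℓ := by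
        intro ℓ _
        rw [dep_root hroot htree, Nat.sub_zero]
      rw [Finset.sum_congr rfl hcg]
      exact Finset.sum_subtype _ (by simp) _
    set W := LinearMap.ker Mα ⊓ LinearMap.ker Mβ with hWdef
    set R' : W →ₗ[k] (({v : V // p v} → k) × k) :=
      ((LinearMap.funLeft k k (fun ℓ : {v : V // p v} => ℓ.1)).prod
        (LinearMap.proj root)).comp W.subtype with hR'def
    have hR'app : ∀ x : W, R' x = (fun ℓ => x.1 ℓ.1, x.1 root) := by
      intro x
      rw [hR'def]
      rfl
    have hWmem : ∀ x : W, Mα x.1 = 0 ∧ Mβ x.1 = 0 := by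
      intro x
      have hx : x.1 ∈ LinearMap.ker Mα ⊓ LinearMap.ker Mβ := x.2
      rw [Submodule.mem_inf, LinearMap.mem_ker, LinearMap.mem_ker] at hx
      exact hx
    have hinj : Function.Injective R' := by
      rw [← LinearMap.ker_eq_bot, Submodule.eq_bot_iff]
      intro x hx
      rw [LinearMap.mem_ker, hR'app] at hx
      have h1 : ∀ ℓ : {v : V // p v}, x.1 ℓ.1 = 0 :=
        fun ℓ => congrFun (congrArg Prod.fst hx) ℓ
      have h2 : x.1 root = 0 := congrArg Prod.snd hx
      have hα := (hWmem x).1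
      have hxz : x.1 = 0 := by
        funext v
        by_cases hv : v = root
        · rw [hv]
          exact h2
        · rw [hkey x.1 hα v hv, Fop_def]
          apply Finset.sum_eq_zero
          intro ℓ hℓ
          rw [mem_Aset] at hℓ
          rw [show x.1 ℓ = 0 from h1 ⟨ℓ, hℓ.1⟩, mul_zero]
      exact Subtype.ext hxz
    set Φ : ((({v : V // p v} → k) × k)) →ₗ[k] (k × k) :=
      (φL.comp (LinearMap.fst k _ k)).prod ((b : k) • LinearMap.snd k _ k) with hΦdef
    have hΦapp : ∀ y : (({v : V // p v} → k) × k), Φ y = (φL y.1, (b:k) * y.2) := by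
      intro y
      rw [hΦdef]
      rfl
    have hrange : LinearMap.range R' = LinearMap.ker Φ := by
      apply le_antisymm
      · rintro y ⟨x, rfl⟩
        rw [LinearMap.mem_ker, hΦapp, hR'app]
        obtain ⟨hα, hβ⟩ := hWmem x
        have hroot0 : loop root → x.1 root = 0 := by
          intro hl
          have hb1 := hrootloop.mp hl
          have hthis := congrFun hβ root
          rw [hMβ] at hthis
          simpa [hb1] using hthis
        have hc1 : φL (fun ℓ => x.1 ℓ.1) = 0 := by
          rw [← hFoproot, hrooteq x.1 hα]
          by_cases hl : loop root
          · rw [if_pos hl]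
            exact hroot0 hl
          · rw [if_neg hl]
        have hc2 : (b:k) * x.1 root = 0 := by
          rcases Nat.le_one_iff_eq_zero_or_eq_one.mp hb with h | h
          · rw [h]
            simp
          · rw [hroot0 (hrootloop.mpr h), mul_zero]
        rw [hc1, hc2]
        rfl
      · rintro ⟨g, c⟩ hy
        rw [LinearMap.mem_ker, hΦapp] at hy
        have hgc1 : φL g = 0 := congrArg Prod.fst hy
        have hgc2 : (b:k) * c = 0 := congrArg Prod.snd hy
        set g' : V → k := fun v => if h : p v then g ⟨v, h⟩ else 0 with hg'def
        have hg'ℓ : ∀ ℓ : {v : V // p v}, g' ℓ.1 = g ℓ := by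
          intro ℓ
          simp only [hg'def]
          rw [dif_pos ℓ.2]
        set f : V → k := fun v => if v = root then c else Fop k root htree p g' v with hfdef
        have hcnull : loop root → c = 0 := by
          intro hl
          have hb1 := hrootloop.mp hl
          rw [hb1, Nat.cast_one, one_mul] at hgc2
          exact hgc2
        have hfc : ∀ v : V, v ≠ root → f v = Fop k root htree p g' v := by
          intro v hv
          rw [hfdef]
          simp only [if_neg hv]
        have hfr : f root = c := by
          rw [hfdef]
          simp
        have hfα : Mα f = 0 := by
          rw [hkerMα]
          intro w
          have hpart := sum_child_Fop k hroot htree p g' w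
          have hsum : ∑ c' ∈ childset root parent w, f c'
              = ∑ c' ∈ childset root parent w, Fop k root htree p g' c' := by
            apply Finset.sum_congr rfl
            intro c' hc'
            refine hfc c' ?_
            rw [childset, Finset.mem_filter] at hc'
            exact hc'.2.1
          rw [hsum, hpart]
          by_cases hw : w = root
          · rw [hw, if_neg hproot]
            have hFr : Fop k root htree p g' root = 0 := by
              rw [hFoproot]
              have hge : (fun ℓ : {v : V // p v} => g' ℓ.1) = g := funext hg'ℓ
              rw [hge, hgc1]
            rw [hFr, hfr]
            by_cases hl : loop root
            · rw [if_pos hl, hcnull hl]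
              ring
            · rw [if_neg hl]
              ring
          · rw [hfc w hw]
            by_cases hl : loop w
            · have hpw : ¬ p w := fun h => h.2 hl
              rw [if_neg hpw, if_pos hl]
              ring
            · have hpw : p w := ⟨fun ⟨w1,hw1,hw2⟩ => hl (hinternal w hw ⟨w1,hw1,hw2⟩), hl⟩
              rw [if_pos hpw, if_neg hl, hFopleaf g' w hpw]
              ring
        have hfβ : Mβ f = 0 := by
          funext w
          rw [hMβ]
          by_cases hbw : b = 1 ∧ w = root
          · rw [if_pos hbw, hfr, hcnull (hrootloop.mpr hbw.1)]
            rfl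
          · rw [if_neg hbw]
            rfl
        refine ⟨⟨f, ?_⟩, ?_⟩
        · rw [hWdef, Submodule.mem_inf]
          exact ⟨LinearMap.mem_ker.mpr hfα, LinearMap.mem_ker.mpr hfβ⟩
        · rw [hR'app]
          have h1 : (fun ℓ : {v : V // p v} => f ℓ.1) = g := by
            funext ℓ
            have hlr : ℓ.1 ≠ root := fun h => hproot (h ▸ ℓ.2)
            rw [hfc ℓ.1 hlr, hFopleaf g' ℓ.1 ℓ.2, hg'ℓ]
          rw [h1]
          show (g, f root) = (g, c)
          rw [hfr]
    have hfinL : Module.finrank k (({v : V // p v} → k) × k) = a + 1 := by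
      rw [Module.finrank_prod, Module.finrank_pi, Module.finrank_self, hcardL]
    rcases Nat.le_one_iff_eq_zero_or_eq_one.mp hb with hb0 | hb1
    · subst hb0
      set ψ : ((({v : V // p v} → k) × k)) →ₗ[k] k := φL.comp (LinearMap.fst k _ k) with hψdef
      have hkerΦ : LinearMap.ker Φ = LinearMap.ker ψ := by
        have hΦψ : Φ = ψ.prod 0 := by
          rw [hΦdef, hψdef]
          congr 1
          rw [Nat.cast_zero, zero_smul]
        rw [hΦψ, LinearMap.ker_prod, LinearMap.ker_zero, inf_top_eq]
      have hψsurj : Function.Surjective ψ := by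
        intro x
        obtain ⟨g, hg⟩ := hφLsurj x
        refine ⟨(g, 0), ?_⟩
        rw [hψdef]
        simpa using hg
      have hcount := finrank_of_equiv_ker R' ψ hinj (by rw [hrange, hkerΦ]) hψsurj
      rw [hfinL, Module.finrank_self] at hcount
      omega
    · subst hb1
      have hΦsurj : Function.Surjective Φ := by
        intro y
        obtain ⟨g, hg⟩ := hφLsurj y.1
        refine ⟨(g, y.2), ?_⟩
        rw [hΦapp, hg, Nat.cast_one, one_mul]
      have hcount := finrank_of_equiv_ker R' Φ hinj hrange hΦsurj
      rw [hfinL, Module.finrank_prod, Module.finrank_self] at hcount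
      omega
end
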